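/- arXiv:2301.12366 — 5 statements merged into one kernel-verified Lean document; each statement's English description precedes it below -/
import Mathlib

section
/- In the one-armed bandit setting with r(t) = μ(t/T), suppose μ(x) > 0 for all x ∈ [x_i, x_{i+1}], and assume B² ≥ 6ΔT log T and B ≥ 2 log T. Then the regret of BE(B, Δ) on epoch i satisfies E[∑_{t=t_i}^{t_{i+1}} R_t] ≤ 1. -/
open MeasureTheory

/-- The stopping time of the Budgeted Exploration policy in epoch `i` (epochs have length
`E = ΔT`; rounds are `1, …, T` and epoch `i` consists of rounds `i·E+1, …, (i+1)·E`):
`beS Z1 B E i ω = min{ S̃ᵢ, E − 1 }` where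
`S̃ᵢ = min{ s ≥ 0 : ∑_{u=0}^{s} Z1 (i·E+1+u) ω ≤ −B }`. -/
noncomputable def beS {Ω : Type*} (Z1 : ℕ → Ω → ℝ) (B : ℝ) (E i : ℕ) (ω : Ω) : ℕ := by
  classical
  exact if h : ∃ s : ℕ, (∑ u ∈ Finset.range (s + 1), Z1 (i * E + 1 + u) ω) ≤ -B then
    min (Nat.find h) (E - 1)
  else E - 1

/-- The arm chosen by the Budgeted Exploration policy `BE(B, Δ)` (with `E = ΔT`) at round
`t ∈ {1, …, T}`: arm 1 (`true`) while the within-epoch offset is at most the epoch's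
stopping time, arm 0 (`false`) for the remaining rounds of the epoch. -/
noncomputable def beArm {Ω : Type*} (Z1 : ℕ → Ω → ℝ) (B : ℝ) (E t : ℕ) (ω : Ω) : Bool :=
  decide ((t - 1) % E ≤ beS Z1 B E ((t - 1) / E) ω)

/-- The reward collected by the Budgeted Exploration policy at round `t`. -/
noncomputable def beReward {Ω : Type*} (Z0 Z1 : ℕ → Ω → ℝ) (B : ℝ) (E t : ℕ) (ω : Ω) : ℝ :=
  if beArm Z1 B E t ω then Z1 t ω else Z0 t ω

/-- The (expected) regret `E[∑_{t=1}^T R_t]` of the Budgeted Exploration policy over horizon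
`T`, where `R_t = max{0, r t} − Z_{A_t}^t` and `r t` is the mean reward of arm 1 at round `t`. -/
noncomputable def beRegret {Ω : Type*} [MeasurableSpace Ω] (P : Measure Ω)
    (Z0 Z1 : ℕ → Ω → ℝ) (B : ℝ) (E T : ℕ) (r : ℕ → ℝ) : ℝ :=
  ∑ t ∈ Finset.Icc 1 T, (max (r t) 0 - ∫ ω, beReward Z0 Z1 B E t ω ∂P)


open ProbabilityTheory Real

private lemma le_beS_iff' {Ω : Type*} (Z1 : ℕ → Ω → ℝ) (B : ℝ) (E i : ℕ) (ω : Ω) (s : ℕ)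
    (hs : s ≤ E - 1) :
    s ≤ beS Z1 B E i ω ↔
    ∀ u < s, -B < ∑ v ∈ Finset.range (u + 1), Z1 (i * E + 1 + v) ω := by
  classical
  unfold beS
  split_ifs with h
  · rw [le_min_iff]
    constructor
    · rintro ⟨h1, _⟩ u hu
      exact lt_of_not_ge ((Nat.le_find_iff h s).mp h1 u hu)
    · intro hall
      exact ⟨(Nat.le_find_iff h s).mpr fun u hu => not_le.mpr (hall u hu), hs⟩
  · push_neg at h
    exact iff_of_true hs fun u _ => h u

private lemma mgf_le_bdd {Ω : Type*} [MeasurableSpace Ω] (P : Measure Ω) [IsProbabilityMeasure P]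
    (X : Ω → ℝ) (hX : Measurable X) (hmem : ∀ ω, X ω ∈ Set.Icc (-1:ℝ) 1)
    (hmean : 0 ≤ ∫ ω, X ω ∂P) (τ : ℝ) (hτ : τ ≤ 0) :
    mgf X P τ ≤ Real.exp (τ ^ 2 / 2) := by
  have hint : Integrable X P :=
    (integrable_const (1:ℝ)).mono' hX.aestronglyMeasurable
      (Filter.Eventually.of_forall fun ω => abs_le.mpr ⟨(hmem ω).1, (hmem ω).2⟩)
  have key : ∀ ω, Real.exp (τ * X ω) ≤
      (Real.exp τ + Real.exp (-τ)) / 2 + X ω * ((Real.exp τ - Real.exp (-τ)) / 2) := by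
    intro ω
    have hx := hmem ω
    have ha : (0:ℝ) ≤ (1 + X ω) / 2 := by nlinarith [hx.1]
    have hb : (0:ℝ) ≤ (1 - X ω) / 2 := by nlinarith [hx.2]
    have hab : (1 + X ω) / 2 + (1 - X ω) / 2 = 1 := by ring
    have hc := convexOn_exp.2 (Set.mem_univ τ) (Set.mem_univ (-τ)) ha hb hab
    simp only [smul_eq_mul] at hc
    have harg : (1 + X ω) / 2 * τ + (1 - X ω) / 2 * (-τ) = τ * X ω := by ring
    rw [harg] at hc
    calc Real.exp (τ * X ω) ≤ (1 + X ω) / 2 * Real.exp τ + (1 - X ω) / 2 * Real.exp (-τ) := hc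
      _ = (Real.exp τ + Real.exp (-τ)) / 2 + X ω * ((Real.exp τ - Real.exp (-τ)) / 2) := by ring
  have hintR : Integrable (fun ω => (Real.exp τ + Real.exp (-τ)) / 2
      + X ω * ((Real.exp τ - Real.exp (-τ)) / 2)) P :=
    (integrable_const _).add (hint.mul_const _)
  have hintL : Integrable (fun ω => Real.exp (τ * X ω)) P := by
    refine (integrable_const (Real.exp |τ|)).mono' (hX.const_mul τ).exp.aestronglyMeasurable
      (Filter.Eventually.of_forall fun ω => ?_)
    rw [Real.norm_eq_abs, abs_of_pos (Real.exp_pos _)]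
    apply Real.exp_le_exp.mpr
    have hx := hmem ω
    calc τ * X ω ≤ |τ * X ω| := le_abs_self _
      _ = |τ| * |X ω| := abs_mul _ _
      _ ≤ |τ| * 1 := by
          have : |X ω| ≤ 1 := abs_le.mpr ⟨hx.1, hx.2⟩
          nlinarith [abs_nonneg τ]
      _ = |τ| := mul_one _
  have h1 : mgf X P τ ≤ ∫ ω, ((Real.exp τ + Real.exp (-τ)) / 2
      + X ω * ((Real.exp τ - Real.exp (-τ)) / 2)) ∂P :=
    integral_mono hintL hintR key
  have h2 : ∫ ω, ((Real.exp τ + Real.exp (-τ)) / 2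
      + X ω * ((Real.exp τ - Real.exp (-τ)) / 2)) ∂P
      = (Real.exp τ + Real.exp (-τ)) / 2
        + (∫ ω, X ω ∂P) * ((Real.exp τ - Real.exp (-τ)) / 2) := by
    rw [integral_add (integrable_const _) (hint.mul_const _), integral_const,
      integral_mul_const]
    simp
  have h3 : (Real.exp τ + Real.exp (-τ)) / 2
        + (∫ ω, X ω ∂P) * ((Real.exp τ - Real.exp (-τ)) / 2) ≤ Real.cosh τ := by
    rw [Real.cosh_eq]
    have hsh : Real.exp τ - Real.exp (-τ) ≤ 0 := by
      have := Real.exp_le_exp.mpr (show τ ≤ -τ by linarith)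
      linarith
    nlinarith [hmean]
  calc mgf X P τ ≤ _ := h1
    _ = _ := h2
    _ ≤ Real.cosh τ := h3
    _ ≤ Real.exp (τ ^ 2 / 2) := Real.cosh_le_exp_half_sq τ

private lemma chernoff_sum {Ω ι : Type*} [MeasurableSpace Ω] (P : Measure Ω)
    [IsProbabilityMeasure P]
    (f : ι → Ω → ℝ) (hindep : iIndepFun f P)
    (hmeas : ∀ j, Measurable (f j)) (S : Finset ι) (hS : S.Nonempty)
    (hmem : ∀ j ∈ S, ∀ ω, f j ω ∈ Set.Icc (-1:ℝ) 1)
    (hmean : ∀ j ∈ S, 0 ≤ ∫ ω, f j ω ∂P) (B : ℝ) (hB : 0 ≤ B) :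
    (P {ω | ∑ j ∈ S, f j ω ≤ -B}).toReal ≤ Real.exp (-(B ^ 2) / (2 * S.card)) := by
  classical
  set n : ℕ := S.card with hn
  have hn1 : 1 ≤ n := Finset.card_pos.mpr hS
  have hnR : (0:ℝ) < n := by exact_mod_cast hn1
  set τ : ℝ := -B / n with hτdef
  have hτ : τ ≤ 0 := div_nonpos_of_nonpos_of_nonneg (neg_nonpos.mpr hB) hnR.le
  have hintj : ∀ j ∈ S, Integrable (fun ω => Real.exp (τ * f j ω)) P := by
    intro j hj
    refine (integrable_const (Real.exp |τ|)).mono'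
      ((hmeas j).const_mul τ).exp.aestronglyMeasurable
      (Filter.Eventually.of_forall fun ω => ?_)
    rw [Real.norm_eq_abs, abs_of_pos (Real.exp_pos _)]
    apply Real.exp_le_exp.mpr
    have hx := hmem j hj ω
    have : |f j ω| ≤ 1 := abs_le.mpr ⟨hx.1, hx.2⟩
    calc τ * f j ω ≤ |τ * f j ω| := le_abs_self _
      _ = |τ| * |f j ω| := abs_mul _ _
      _ ≤ |τ| := by nlinarith [abs_nonneg τ]
  have hint : Integrable (fun ω => Real.exp (τ * (∑ j ∈ S, f j) ω)) P :=
    hindep.integrable_exp_mul_sum hmeas hintj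
  have hcher := measure_le_le_exp_mul_mgf (μ := P) (X := ∑ j ∈ S, f j) (-B) hτ hint
  have hset : {ω | (∑ j ∈ S, f j) ω ≤ -B} = {ω | ∑ j ∈ S, f j ω ≤ -B} := by
    ext ω; simp [Finset.sum_apply]
  rw [hset] at hcher
  refine hcher.trans ?_
  have hmgf : mgf (∑ j ∈ S, f j) P τ ≤ Real.exp (n * (τ ^ 2 / 2)) := by
    rw [hindep.mgf_sum hmeas]
    calc ∏ j ∈ S, mgf (f j) P τ ≤ ∏ j ∈ S, Real.exp (τ ^ 2 / 2) := by
          refine Finset.prod_le_prod (fun j _ => mgf_nonneg) fun j hj => ?_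
          exact mgf_le_bdd P (f j) (hmeas j) (hmem j hj) (hmean j hj) τ hτ
      _ = Real.exp (n * (τ ^ 2 / 2)) := by
          rw [Finset.prod_const, ← Real.exp_nat_mul]
  calc Real.exp (-τ * -B) * mgf (∑ j ∈ S, f j) P τ
      ≤ Real.exp (-τ * -B) * Real.exp (n * (τ ^ 2 / 2)) :=
        mul_le_mul_of_nonneg_left hmgf (Real.exp_pos _).le
    _ = Real.exp (-τ * -B + n * (τ ^ 2 / 2)) := (Real.exp_add _ _).symm
    _ = Real.exp (-(B ^ 2) / (2 * n)) := by
        congr 1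
        rw [hτdef]
        field_simp
        ring


set_option maxHeartbeats 1000000 in
/-- **Regret on positive epochs (Lemma 4).**
One-armed setting over horizon `T = m·E`, `Δ = 1/m`, mean rewards `r(t) = μ(t/T)`.
If `μ > 0` on the epoch interval `[x_i, x_{i+1}] = [iΔ, (i+1)Δ]`, `B² ≥ 6ΔT log T` and
`B ≥ 2 log T`, then the regret of `BE(B, Δ)` on epoch `i` is at most `1`. -/
theorem regret_positive_epoch
    {Ω : Type*} [MeasurableSpace Ω] (P : Measure Ω) [IsProbabilityMeasure P]
    (T E m i : ℕ) (B Δ : ℝ) (μ : ℝ → ℝ) (Z0 Z1 : ℕ → Ω → ℝ)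
    (hE : 1 ≤ E) (hm : 1 ≤ m) (hT : T = m * E) (hi : i < m)
    (hΔ : Δ = (m : ℝ)⁻¹)
    (hB : 1 ≤ B)
    (hBlog : 2 * Real.log T ≤ B)
    (hB2 : 6 * Δ * T * Real.log T ≤ B ^ 2)
    (hpos : ∀ x ∈ Set.Icc ((i : ℝ) * Δ) (((i : ℝ) + 1) * Δ), 0 < μ x)
    (hmeas0 : ∀ t, Measurable (Z0 t)) (hmeas1 : ∀ t, Measurable (Z1 t))
    (hmem0 : ∀ t ω, Z0 t ω ∈ Set.Icc (-1:ℝ) 1) (hmem1 : ∀ t ω, Z1 t ω ∈ Set.Icc (-1:ℝ) 1)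
    (hmean0 : ∀ t, ∫ ω, Z0 t ω ∂P = 0)
    (hmean1 : ∀ t, 1 ≤ t → t ≤ T → ∫ ω, Z1 t ω ∂P = μ ((t : ℝ) / T))
    (hindep : ProbabilityTheory.iIndepFun
      (fun p : Bool × ℕ => fun ω => if p.1 then Z1 p.2 ω else Z0 p.2 ω) P) :
    ∑ t ∈ Finset.Icc (i * E + 1) ((i + 1) * E),
      (max (μ ((t : ℝ) / T)) 0 - ∫ ω, beReward Z0 Z1 B E t ω ∂P) ≤ 1 := by

  classical
  have hEpos : 0 < E := hE
  have hT1 : 1 ≤ T := by rw [hT]; exact Nat.one_le_iff_ne_zero.mpr (by positivity)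
  have hTpos : (0:ℝ) < T := by exact_mod_cast hT1
  have hET : E ≤ T := by rw [hT]; exact Nat.le_mul_of_pos_left E hm
  have hmR : (0:ℝ) < m := by exact_mod_cast hm
  have hΔE : Δ = (E:ℝ) / T := by
    rw [hΔ, hT]; push_cast; field_simp
  set t0 : ℕ := i * E with ht0
  set f : Bool × ℕ → Ω → ℝ := fun p ω => if p.1 then Z1 p.2 ω else Z0 p.2 ω with hfdef
  have hfmeas : ∀ p, Measurable (f p) := by
    rintro ⟨b, u⟩
    cases b
    · simpa [hfdef] using hmeas0 u
    · simpa [hfdef] using hmeas1 u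
  have hfeq1 : ∀ u, (fun ω => f (true, u) ω) = Z1 u := fun u => by
    funext ω; simp [hfdef]
  have hfeq0 : ∀ u, (fun ω => f (false, u) ω) = Z0 u := fun u => by
    funext ω; simp [hfdef]
  -- means of arm 1 in the epoch are positive
  have hμmem : ∀ t' : ℕ, t0 + 1 ≤ t' → t' ≤ t0 + E →
      ((t' : ℝ) / T) ∈ Set.Icc ((i : ℝ) * Δ) (((i : ℝ) + 1) * Δ) := by
    intro t' h1 h2
    have hc1 : ((i * E : ℕ) : ℝ) ≤ (t' : ℝ) := by exact_mod_cast le_trans (Nat.le_succ _) h1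
    have hc2 : (t' : ℝ) ≤ ((i * E + E : ℕ) : ℝ) := by exact_mod_cast h2
    constructor
    · rw [hΔE]
      calc (i : ℝ) * ((E:ℝ)/T) = ((i * E : ℕ) : ℝ) / T := by push_cast; ring
        _ ≤ (t' : ℝ) / T := by gcongr
    · rw [hΔE]
      calc (t' : ℝ) / T ≤ ((i * E + E : ℕ) : ℝ) / T := by gcongr
        _ = ((i : ℝ) + 1) * ((E:ℝ)/T) := by push_cast; ring
  have htle : t0 + E ≤ T := by
    rw [hT, ht0]
    calc i * E + E = (i + 1) * E := by ring
      _ ≤ m * E := Nat.mul_le_mul_right E hi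
  have hmean_pos : ∀ t' : ℕ, t0 + 1 ≤ t' → t' ≤ t0 + E → 0 < ∫ ω, Z1 t' ω ∂P := by
    intro t' h1 h2
    rw [hmean1 t' (by omega) (le_trans h2 htle)]
    exact hpos _ (hμmem t' h1 h2)
  -- Chernoff bound for each early-stopping probability
  have hprob : ∀ u : ℕ, u + 1 ≤ E →
      (P {ω | ∑ v ∈ Finset.range (u + 1), Z1 (t0 + 1 + v) ω ≤ -B}).toReal
        ≤ ((T:ℝ) ^ 3)⁻¹ := by
    intro u hu
    set S2 : Finset (Bool × ℕ) := (Finset.range (u + 1)).image (fun v => (true, t0 + 1 + v))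
      with hS2
    have hinj : ∀ a ∈ Finset.range (u + 1), ∀ b ∈ Finset.range (u + 1),
        (fun v => (true, t0 + 1 + v)) a = (fun v => (true, t0 + 1 + v)) b → a = b := by
      intro a _ b _ h
      simpa using h
    have hcard : S2.card = u + 1 := by
      rw [hS2, Finset.card_image_of_injOn hinj, Finset.card_range]
    have hsum_eq : ∀ ω, ∑ j ∈ S2, f j ω = ∑ v ∈ Finset.range (u + 1), Z1 (t0 + 1 + v) ω := by
      intro ω
      rw [hS2, Finset.sum_image hinj]
      exact Finset.sum_congr rfl fun v _ => by simp [hfdef]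
    have hS2ne : S2.Nonempty := by
      rw [hS2]
      exact (Finset.nonempty_range_iff.mpr (Nat.succ_ne_zero u)).image _
    have hmem2 : ∀ j ∈ S2, ∀ ω, f j ω ∈ Set.Icc (-1:ℝ) 1 := by
      intro j hj ω
      rw [hS2, Finset.mem_image] at hj
      obtain ⟨v, -, rfl⟩ := hj
      simpa [hfdef] using hmem1 (t0 + 1 + v) ω
    have hmean2 : ∀ j ∈ S2, 0 ≤ ∫ ω, f j ω ∂P := by
      intro j hj
      rw [hS2, Finset.mem_image] at hj
      obtain ⟨v, hv, rfl⟩ := hj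
      rw [Finset.mem_range] at hv
      have : (fun ω => f (true, t0 + 1 + v) ω) = Z1 (t0 + 1 + v) := hfeq1 _
      rw [this]
      exact (hmean_pos (t0 + 1 + v) (by omega) (by omega)).le
    have hch := chernoff_sum P f hindep hfmeas S2 hS2ne hmem2 hmean2 B (by linarith)
    have hseteq : {ω | ∑ j ∈ S2, f j ω ≤ -B}
        = {ω | ∑ v ∈ Finset.range (u + 1), Z1 (t0 + 1 + v) ω ≤ -B} := by
      ext ω; rw [Set.mem_setOf_eq, Set.mem_setOf_eq, hsum_eq ω]
    rw [hseteq, hcard] at hch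
    refine hch.trans ?_
    -- exp(-B^2/(2(u+1))) ≤ exp(-B^2/(2E)) ≤ T^(-3)
    have hn1 : (0:ℝ) < (u + 1 : ℕ) := by positivity
    have hnE : ((u + 1 : ℕ) : ℝ) ≤ (E : ℝ) := by exact_mod_cast (by omega : u + 1 ≤ E)
    have hstep1 : -(B ^ 2) / (2 * ((u + 1 : ℕ) : ℝ)) ≤ -(B ^ 2) / (2 * (E : ℝ)) := by
      have h2n : (0:ℝ) < 2 * ((u + 1 : ℕ) : ℝ) := by linarith
      have := div_le_div_of_nonneg_left (sq_nonneg B) h2n (by linarith : 2 * ((u+1:ℕ):ℝ) ≤ 2 * (E:ℝ))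
      rw [neg_div, neg_div]
      rw [sq] at this ⊢
      linarith
    have hEposR : (0:ℝ) < E := by exact_mod_cast hEpos
    have hBE : 6 * (E : ℝ) * Real.log T ≤ B ^ 2 := by
      have hΔT : Δ * (T : ℝ) = (E : ℝ) := by
        rw [hΔE, div_mul_cancel₀ _ (ne_of_gt hTpos)]
      calc 6 * (E : ℝ) * Real.log T = 6 * Δ * T * Real.log T := by rw [← hΔT]; ring
        _ ≤ B ^ 2 := hB2
    have hstep2 : -(B ^ 2) / (2 * (E : ℝ)) ≤ -(3 * Real.log T) := by
      rw [div_le_iff₀ (by linarith : (0:ℝ) < 2 * (E:ℝ))]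
      nlinarith
    have hexp3 : Real.exp (-(3 * Real.log T)) = ((T:ℝ) ^ 3)⁻¹ := by
      rw [Real.exp_neg]
      congr 1
      rw [show (3:ℝ) * Real.log T = ((3:ℕ):ℝ) * Real.log T by norm_num,
        Real.exp_nat_mul, Real.exp_log hTpos]
    rw [← hexp3]
    exact Real.exp_le_exp.mpr (hstep1.trans hstep2)

  -- per-round bound
  have key : ∀ t ∈ Finset.Icc (i * E + 1) ((i + 1) * E),
      max (μ ((t : ℝ) / T)) 0 - ∫ ω, beReward Z0 Z1 B E t ω ∂P ≤ (E : ℝ) * (((T:ℝ) ^ 3)⁻¹) := by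
    intro t ht
    rw [Finset.mem_Icc] at ht
    have ht1 : t0 + 1 ≤ t := ht.1
    have ht2 : t ≤ t0 + E := by
      rw [ht0]
      calc t ≤ (i + 1) * E := ht.2
        _ = i * E + E := by ring
    set s : ℕ := t - 1 - t0 with hsdef
    have hts : t - 1 = t0 + s := by omega
    have hsE : s ≤ E - 1 := by omega
    have hsE' : s < E := by omega
    have hdiv : (t - 1) / E = i := by
      rw [hts, ht0, add_comm, Nat.add_mul_div_right _ _ hEpos, Nat.div_eq_of_lt hsE', zero_add]
    have hmod : (t - 1) % E = s := by
      rw [hts, ht0, add_comm, Nat.add_mul_mod_self_right, Nat.mod_eq_of_lt hsE']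
    -- mean reward at time t
    have hμt_eq : ∫ ω, Z1 t ω ∂P = μ ((t : ℝ) / T) := hmean1 t (by omega) (le_trans ht2 htle)
    have hμt_pos : 0 < μ ((t : ℝ) / T) := hpos _ (hμmem t ht1 ht2)
    have hμt_le : μ ((t : ℝ) / T) ≤ 1 := by
      rw [← hμt_eq]
      calc ∫ ω, Z1 t ω ∂P ≤ ∫ _ω, (1:ℝ) ∂P := by
            refine integral_mono ?_ (integrable_const 1) (fun ω => (hmem1 t ω).2)
            exact (integrable_const (1:ℝ)).mono' (hmeas1 t).aestronglyMeasurable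
              (Filter.Eventually.of_forall fun ω =>
                abs_le.mpr ⟨(hmem1 t ω).1, (hmem1 t ω).2⟩)
        _ = 1 := by simp
    -- the indicator of playing arm 1
    obtain ⟨W, hWdef⟩ : ∃ W : Ω → ℝ, W = fun ω => if s ≤ beS Z1 B E i ω then 1 else 0 :=
      ⟨_, rfl⟩
    have hWiff : ∀ ω, (s ≤ beS Z1 B E i ω) ↔
        ∀ u < s, -B < ∑ v ∈ Finset.range (u + 1), Z1 (t0 + 1 + v) ω := by
      intro ω
      rw [le_beS_iff' Z1 B E i ω s hsE, ht0]
    have hWeq : W = fun ω =>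
        if ∀ u ∈ Finset.range s, -B < ∑ v ∈ Finset.range (u + 1), Z1 (t0 + 1 + v) ω
        then (1:ℝ) else 0 := by
      funext ω
      rw [hWdef]
      refine if_congr ?_ rfl rfl
      rw [hWiff ω]
      simp [Finset.mem_range]
    have hWmeas : Measurable W := by
      rw [hWeq]
      refine Measurable.ite ?_ measurable_const measurable_const
      have hseteq : {ω | ∀ u ∈ Finset.range s,
          -B < ∑ v ∈ Finset.range (u + 1), Z1 (t0 + 1 + v) ω}
          = ⋂ u ∈ Finset.range s,
            {ω | -B < ∑ v ∈ Finset.range (u + 1), Z1 (t0 + 1 + v) ω} := by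
        ext ω; simp
      rw [hseteq]
      exact MeasurableSet.biInter (Set.to_countable _)
        fun u _ => measurableSet_lt measurable_const (Finset.measurable_sum _ fun v _ => hmeas1 _)
    have hW01 : ∀ ω, W ω ∈ Set.Icc (0:ℝ) 1 := by
      intro ω; rw [hWdef]; dsimp only; split_ifs <;> simp
    have hWint : Integrable W P :=
      (integrable_const (1:ℝ)).mono' hWmeas.aestronglyMeasurable
        (Filter.Eventually.of_forall fun ω =>
          abs_le.mpr ⟨by linarith [(hW01 ω).1], (hW01 ω).2⟩)
    -- independence of W from the round-t rewards
    obtain ⟨S1, hS1⟩ : ∃ S1 : Finset (Bool × ℕ),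
        S1 = (Finset.range s).image (fun v => (true, t0 + 1 + v)) := ⟨_, rfl⟩
    obtain ⟨g, hgdef⟩ : ∃ g : (S1 → ℝ) → ℝ, g = fun x =>
        if ∀ u ∈ Finset.range s, -B < ∑ v ∈ Finset.range (u + 1),
            (if h : (true, t0 + 1 + v) ∈ S1 then x ⟨_, h⟩ else 0)
        then (1:ℝ) else 0 := ⟨_, rfl⟩
    have hgmeas : Measurable g := by
      rw [hgdef]
      refine Measurable.ite ?_ measurable_const measurable_const
      have hseteq : {x : S1 → ℝ | ∀ u ∈ Finset.range s, -B < ∑ v ∈ Finset.range (u + 1),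
            (if h : (true, t0 + 1 + v) ∈ S1 then x ⟨_, h⟩ else 0)}
          = ⋂ u ∈ Finset.range s, {x : S1 → ℝ | -B < ∑ v ∈ Finset.range (u + 1),
            (if h : (true, t0 + 1 + v) ∈ S1 then x ⟨_, h⟩ else 0)} := by
        ext x; simp
      rw [hseteq]
      refine MeasurableSet.biInter (Set.to_countable _) fun u _ =>
        measurableSet_lt measurable_const (Finset.measurable_sum _ fun v _ => ?_)
      by_cases h : (true, t0 + 1 + v) ∈ S1
      · simpa [h] using measurable_pi_apply (⟨(true, t0 + 1 + v), h⟩ : S1)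
      · simpa [h] using measurable_const
    have hcomp : (fun ω => g fun j : S1 => f j ω) = W := by
      funext ω
      rw [hWeq, hgdef]
      refine if_congr ?_ rfl rfl
      refine forall₂_congr fun u hu => ?_
      have hsum : (∑ v ∈ Finset.range (u + 1),
          (if h : (true, t0 + 1 + v) ∈ S1 then f (true, t0 + 1 + v) ω else 0))
          = ∑ v ∈ Finset.range (u + 1), Z1 (t0 + 1 + v) ω := by
        refine Finset.sum_congr rfl fun v hv => ?_
        have hvmem : (true, t0 + 1 + v) ∈ S1 := by
          rw [hS1]
          exact Finset.mem_image.mpr ⟨v, Finset.mem_range.mpr (by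
            rw [Finset.mem_range] at hu hv; omega), rfl⟩
        rw [dif_pos hvmem]
        simp [hfdef]
      rw [hsum]
    have hdisj1 : Disjoint S1 ({(true, t)} : Finset (Bool × ℕ)) := by
      rw [Finset.disjoint_singleton_right, hS1]
      simp only [Finset.mem_image, Finset.mem_range, Prod.mk.injEq, not_exists]
      rintro v ⟨hv, -, hvt⟩
      omega
    have hdisj0 : Disjoint S1 ({(false, t)} : Finset (Bool × ℕ)) := by
      rw [Finset.disjoint_singleton_right, hS1]
      simp
    have hind : ∀ (b : Bool), Disjoint S1 ({(b, t)} : Finset (Bool × ℕ)) →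
        IndepFun W (f (b, t)) P := by
      intro b hdisj
      have h1 := hindep.indepFun_finset S1 {(b, t)} hdisj hfmeas
      have h2 := h1.comp hgmeas
        (measurable_pi_apply (⟨(b, t), Finset.mem_singleton_self _⟩ :
          ({(b, t)} : Finset (Bool × ℕ))))
      have h3 : IndepFun (fun ω => g fun j : S1 => f j ω) (fun ω => f (b, t) ω) P := h2
      rwa [hcomp] at h3
    have hind1 : IndepFun W (Z1 t) P := by
      have := hind true hdisj1
      rwa [show (f (true, t)) = Z1 t from funext fun ω => by simp [hfdef]] at this
    have hind0 : IndepFun W (Z0 t) P := by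
      have := hind false hdisj0
      rwa [show (f (false, t)) = Z0 t from funext fun ω => by simp [hfdef]] at this
    -- integral of the reward
    obtain ⟨p, hpdef⟩ : ∃ p : ℝ, p = ∫ ω, W ω ∂P := ⟨_, rfl⟩
    have hp0 : 0 ≤ p := hpdef ▸ integral_nonneg fun ω => (hW01 ω).1
    have hp1 : p ≤ 1 := by
      rw [hpdef]
      calc ∫ ω, W ω ∂P ≤ ∫ _ω, (1:ℝ) ∂P :=
            integral_mono hWint (integrable_const 1) (fun ω => (hW01 ω).2)
        _ = 1 := by simp
    have hZ1int : Integrable (Z1 t) P :=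
      (integrable_const (1:ℝ)).mono' (hmeas1 t).aestronglyMeasurable
        (Filter.Eventually.of_forall fun ω => abs_le.mpr ⟨(hmem1 t ω).1, (hmem1 t ω).2⟩)
    have hZ0int : Integrable (Z0 t) P :=
      (integrable_const (1:ℝ)).mono' (hmeas0 t).aestronglyMeasurable
        (Filter.Eventually.of_forall fun ω => abs_le.mpr ⟨(hmem0 t ω).1, (hmem0 t ω).2⟩)
    have hWZ1int : Integrable (fun ω => W ω * Z1 t ω) P :=
      (integrable_const (1:ℝ)).mono' (hWmeas.mul (hmeas1 t)).aestronglyMeasurable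
        (Filter.Eventually.of_forall fun ω => by
          rw [Real.norm_eq_abs, abs_mul]
          have h1 : |W ω| ≤ 1 := abs_le.mpr ⟨by linarith [(hW01 ω).1], (hW01 ω).2⟩
          have h2 : |Z1 t ω| ≤ 1 := abs_le.mpr ⟨(hmem1 t ω).1, (hmem1 t ω).2⟩
          nlinarith [abs_nonneg (W ω), abs_nonneg (Z1 t ω)])
    have hWZ0int : Integrable (fun ω => W ω * Z0 t ω) P :=
      (integrable_const (1:ℝ)).mono' (hWmeas.mul (hmeas0 t)).aestronglyMeasurable
        (Filter.Eventually.of_forall fun ω => by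
          rw [Real.norm_eq_abs, abs_mul]
          have h1 : |W ω| ≤ 1 := abs_le.mpr ⟨by linarith [(hW01 ω).1], (hW01 ω).2⟩
          have h2 : |Z0 t ω| ≤ 1 := abs_le.mpr ⟨(hmem0 t ω).1, (hmem0 t ω).2⟩
          nlinarith [abs_nonneg (W ω), abs_nonneg (Z0 t ω)])
    have hmul1 : ∫ ω, W ω * Z1 t ω ∂P = p * μ ((t : ℝ) / T) := by
      have := hind1.integral_mul_eq_mul_integral hWmeas.aestronglyMeasurable (hmeas1 t).aestronglyMeasurable
      rw [← hμt_eq, hpdef]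
      simpa [Pi.mul_apply] using this
    have hmul0 : ∫ ω, W ω * Z0 t ω ∂P = 0 := by
      have h := hind0.integral_mul_eq_mul_integral hWmeas.aestronglyMeasurable (hmeas0 t).aestronglyMeasurable
      calc ∫ ω, W ω * Z0 t ω ∂P = (∫ ω, W ω ∂P) * ∫ ω, Z0 t ω ∂P := h
        _ = 0 := by rw [hmean0 t, mul_zero]
    have hreward : ∀ ω, beReward Z0 Z1 B E t ω = W ω * Z1 t ω + (Z0 t ω - W ω * Z0 t ω) := by
      intro ω
      simp only [beReward, beArm, hdiv, hmod, hWdef, decide_eq_true_eq]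
      split_ifs with h
      · ring
      · ring
    have hsubint : Integrable (fun ω => Z0 t ω - W ω * Z0 t ω) P := hZ0int.sub hWZ0int
    have hsub_eq : ∫ ω, (Z0 t ω - W ω * Z0 t ω) ∂P
        = (∫ ω, Z0 t ω ∂P) - ∫ ω, W ω * Z0 t ω ∂P := integral_sub hZ0int hWZ0int
    have hER : ∫ ω, beReward Z0 Z1 B E t ω ∂P = p * μ ((t : ℝ) / T) := by
      calc ∫ ω, beReward Z0 Z1 B E t ω ∂P
          = ∫ ω, (W ω * Z1 t ω + (Z0 t ω - W ω * Z0 t ω)) ∂P :=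
            integral_congr_ae (Filter.Eventually.of_forall hreward)
        _ = (∫ ω, W ω * Z1 t ω ∂P) + ∫ ω, (Z0 t ω - W ω * Z0 t ω) ∂P :=
            integral_add hWZ1int hsubint
        _ = p * μ ((t : ℝ) / T) := by rw [hsub_eq, hmul1, hmul0, hmean0 t]; ring
    -- bound 1 - p by the probability of early stopping
    have hbadmeas : ∀ u : ℕ, MeasurableSet
        {ω | ∑ v ∈ Finset.range (u + 1), Z1 (t0 + 1 + v) ω ≤ -B} :=
      fun u => measurableSet_le (Finset.measurable_sum _ fun v _ => hmeas1 _) measurable_const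
    have hbad : 1 - p ≤ ∑ u ∈ Finset.range s,
        (P {ω | ∑ v ∈ Finset.range (u + 1), Z1 (t0 + 1 + v) ω ≤ -B}).toReal := by
      have hle : ∀ ω, 1 - W ω ≤ ∑ u ∈ Finset.range s,
          Set.indicator {ω' | ∑ v ∈ Finset.range (u + 1), Z1 (t0 + 1 + v) ω' ≤ -B}
            (fun _ => (1:ℝ)) ω := by
        intro ω
        by_cases h : s ≤ beS Z1 B E i ω
        · have hW1 : W ω = 1 := by rw [hWdef]; simp [h]
          rw [hW1]
          simp only [sub_self]
          exact Finset.sum_nonneg fun u _ => Set.indicator_nonneg (fun _ _ => zero_le_one) ω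
        · have hW0 : W ω = 0 := by rw [hWdef]; simp [h]
          rw [hW0, sub_zero]
          rw [hWiff ω] at h
          push_neg at h
          obtain ⟨u, hu, hsum⟩ := h
          have hmemω : ω ∈ {ω' | ∑ v ∈ Finset.range (u + 1), Z1 (t0 + 1 + v) ω' ≤ -B} := hsum
          have hone : Set.indicator
              {ω' | ∑ v ∈ Finset.range (u + 1), Z1 (t0 + 1 + v) ω' ≤ -B} (fun _ => (1:ℝ)) ω
              = 1 := Set.indicator_of_mem hmemω _
          calc (1:ℝ) = _ := hone.symm
            _ ≤ _ := Finset.single_le_sum (f := fun u => Set.indicator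
              {ω' | ∑ v ∈ Finset.range (u + 1), Z1 (t0 + 1 + v) ω' ≤ -B} (fun _ => (1:ℝ)) ω)
              (fun u _ => Set.indicator_nonneg (fun _ _ => zero_le_one) ω)
              (Finset.mem_range.mpr hu)
      have hintsum : Integrable (fun ω => ∑ u ∈ Finset.range s,
          Set.indicator {ω' | ∑ v ∈ Finset.range (u + 1), Z1 (t0 + 1 + v) ω' ≤ -B}
            (fun _ => (1:ℝ)) ω) P :=
        integrable_finset_sum _ fun u _ => (integrable_const (1:ℝ)).indicator (hbadmeas u)
      have hsubint2 : Integrable (fun ω => 1 - W ω) P := (integrable_const 1).sub hWint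
      have h1 : ∫ ω, (1 - W ω) ∂P ≤ ∫ ω, (∑ u ∈ Finset.range s,
          Set.indicator {ω' | ∑ v ∈ Finset.range (u + 1), Z1 (t0 + 1 + v) ω' ≤ -B}
            (fun _ => (1:ℝ)) ω) ∂P := integral_mono hsubint2 hintsum hle
      have hint1W : ∫ ω, (1 - W ω) ∂P = 1 - p := by
        rw [integral_sub (integrable_const 1) hWint, integral_const]
        simp [hpdef]
      have hsum_eq2 : ∫ ω, (∑ u ∈ Finset.range s,
          Set.indicator {ω' | ∑ v ∈ Finset.range (u + 1), Z1 (t0 + 1 + v) ω' ≤ -B}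
            (fun _ => (1:ℝ)) ω) ∂P
          = ∑ u ∈ Finset.range s,
            (P {ω | ∑ v ∈ Finset.range (u + 1), Z1 (t0 + 1 + v) ω ≤ -B}).toReal := by
        rw [integral_finset_sum _ (fun u _ => (integrable_const (1:ℝ)).indicator (hbadmeas u))]
        exact Finset.sum_congr rfl fun u _ => by
          rw [integral_indicator_const (1:ℝ) (hbadmeas u), smul_eq_mul, mul_one, measureReal_def]
      rw [hint1W, hsum_eq2] at h1
      exact h1
    -- combine
    have hterm : max (μ ((t : ℝ) / T)) 0 - ∫ ω, beReward Z0 Z1 B E t ω ∂P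
        = (1 - p) * μ ((t : ℝ) / T) := by
      rw [hER, max_eq_left hμt_pos.le]; ring
    rw [hterm]
    have hone : (1 - p) * μ ((t : ℝ) / T) ≤ 1 - p := by
      nlinarith
    refine hone.trans (hbad.trans ?_)
    calc (∑ u ∈ Finset.range s,
          (P {ω | ∑ v ∈ Finset.range (u + 1), Z1 (t0 + 1 + v) ω ≤ -B}).toReal)
        ≤ ∑ _u ∈ Finset.range s, ((T:ℝ) ^ 3)⁻¹ := Finset.sum_le_sum fun u hu =>
          hprob u (by rw [Finset.mem_range] at hu; omega)
      _ = (s : ℝ) * ((T:ℝ) ^ 3)⁻¹ := by rw [Finset.sum_const, Finset.card_range]; ring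
      _ ≤ (E : ℝ) * ((T:ℝ) ^ 3)⁻¹ := by
          have : (s : ℝ) ≤ (E : ℝ) := by exact_mod_cast hsE'.le
          have : (0:ℝ) ≤ ((T:ℝ) ^ 3)⁻¹ := by positivity
          nlinarith
  -- sum over the epoch
  have hcard : (Finset.Icc (i * E + 1) ((i + 1) * E)).card = E := by
    rw [Nat.card_Icc]
    have : (i + 1) * E = i * E + E := by ring
    omega
  calc ∑ t ∈ Finset.Icc (i * E + 1) ((i + 1) * E),
        (max (μ ((t : ℝ) / T)) 0 - ∫ ω, beReward Z0 Z1 B E t ω ∂P)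
      ≤ ∑ _t ∈ Finset.Icc (i * E + 1) ((i + 1) * E), (E : ℝ) * (((T:ℝ) ^ 3)⁻¹) :=
        Finset.sum_le_sum key
    _ = (E : ℝ) * ((E : ℝ) * (((T:ℝ) ^ 3)⁻¹)) := by
        rw [Finset.sum_const, hcard, nsmul_eq_mul]
    _ ≤ 1 := by
        have hETR : (E:ℝ) ≤ (T:ℝ) := by exact_mod_cast hET
        have hE0 : (0:ℝ) ≤ (E:ℝ) := by positivity
        have hT1R : (1:ℝ) ≤ (T:ℝ) := by exact_mod_cast hT1
        rw [← mul_assoc, ← div_eq_mul_inv, div_le_one (by positivity)]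
        have h1 : (E:ℝ) * E ≤ (T:ℝ) * T := mul_le_mul hETR hETR hE0 (hE0.trans hETR)
        have h2 : (T:ℝ) * T ≤ (T:ℝ) ^ 3 := by nlinarith
        linarith
end

section
/- In the one-armed bandit setting with r(t) = μ(t/T), suppose μ : [0,1] → ℝ is L-Lipschitz and μ(x̃) = 0 for some x̃ ∈ [x_j, x_{j+1}]. Then the regret of BE(B, Δ) on epoch j satisfies E[∑_{t=t_j}^{t_{j+1}} R_t] ≤ 2LΔ²T. -/
open MeasureTheory

open ProbabilityTheory in
/-- The expected reward of BE at a round `t` of epoch `j` equals `p · E[Z1 t]` for some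
probability `p` (the probability that arm 1 is still being played at round `t`). -/
lemma be_integral_eq {Ω : Type*} [MeasurableSpace Ω] (P : Measure Ω) [IsProbabilityMeasure P]
    (E j t : ℕ) (B : ℝ) (Z0 Z1 : ℕ → Ω → ℝ)
    (hE : 1 ≤ E) (ht1 : j * E + 1 ≤ t) (ht2 : t ≤ (j + 1) * E)
    (hmeas0 : ∀ t, Measurable (Z0 t)) (hmeas1 : ∀ t, Measurable (Z1 t))
    (hmem0 : ∀ t ω, Z0 t ω ∈ Set.Icc (-1:ℝ) 1) (hmem1 : ∀ t ω, Z1 t ω ∈ Set.Icc (-1:ℝ) 1)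
    (hmean0 : ∫ ω, Z0 t ω ∂P = 0)
    (hindep : ProbabilityTheory.iIndepFun
      (fun p : Bool × ℕ => fun ω => if p.1 then Z1 p.2 ω else Z0 p.2 ω) P) :
    ∃ p : ℝ, 0 ≤ p ∧ p ≤ 1 ∧
      ∫ ω, beReward Z0 Z1 B E t ω ∂P = p * ∫ ω, Z1 t ω ∂P := by
  classical
  set s : ℕ := t - 1 - j * E with hs
  have hje : (j + 1) * E = j * E + E := by ring
  have hts : t - 1 = s + j * E := by omega
  have hsE : s < E := by omega
  have hdiv : (t - 1) / E = j := by
    rw [hts, Nat.add_mul_div_right _ _ (by omega : 0 < E), Nat.div_eq_of_lt hsE, zero_add]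
  have hmod : (t - 1) % E = s := by
    rw [hts, Nat.add_mul_mod_self_right, Nat.mod_eq_of_lt hsE]
  set f : Bool × ℕ → Ω → ℝ := fun p ω => if p.1 then Z1 p.2 ω else Z0 p.2 ω with hf
  have hfmeas : ∀ p, Measurable (f p) := by
    rintro ⟨b, n⟩; cases b
    · simpa [hf] using hmeas0 n
    · simpa [hf] using hmeas1 n
  set S : Finset (Bool × ℕ) := (Finset.range s).image (fun u => (true, j * E + 1 + u)) with hS
  set X : Ω → (S → ℝ) := fun ω i => f i ω with hX
  have hXmeas : Measurable X := measurable_pi_lambda _ (fun i => hfmeas i)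
  set g : (S → ℝ) → ℕ → ℝ := fun v u =>
    if hu : (true, j * E + 1 + u) ∈ S then v ⟨_, hu⟩ else 0 with hg
  have hgmeas : ∀ u, Measurable (fun v : (S → ℝ) => g v u) := by
    intro u
    by_cases hu : (true, j * E + 1 + u) ∈ S
    · simpa [hg, hu] using measurable_pi_apply (⟨_, hu⟩ : S)
    · simpa [hg, hu] using (measurable_const : Measurable fun _ : (S → ℝ) => (0:ℝ))
  set D : Set (S → ℝ) :=
    {v | ∀ s' < s, -B < ∑ u ∈ Finset.range (s' + 1), g v u} with hD
  have hDmeas : MeasurableSet D := by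
    have hrD : D = ⋂ (s' : ℕ) (_ : s' < s),
        {v | -B < ∑ u ∈ Finset.range (s' + 1), g v u} := by
      ext v; simp [hD]
    rw [hrD]
    refine MeasurableSet.iInter fun s' => MeasurableSet.iInter fun _ => ?_
    exact measurableSet_lt measurable_const (Finset.measurable_sum _ fun u _ => hgmeas u)
  set A : Set Ω := X ⁻¹' D with hA
  have hAmeas : MeasurableSet A := hXmeas hDmeas
  have hgX : ∀ ω : Ω, ∀ u < s, g (X ω) u = Z1 (j * E + 1 + u) ω := by
    intro ω u hu
    have hmem : (true, j * E + 1 + u) ∈ S := by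
      rw [hS, Finset.mem_image]
      exact ⟨u, Finset.mem_range.mpr hu, rfl⟩
    simp [hg, hmem, hX, hf]
  have hAiff : ∀ ω, ω ∈ A ↔
      ∀ s' < s, -B < ∑ u ∈ Finset.range (s' + 1), Z1 (j * E + 1 + u) ω := by
    intro ω
    simp only [hA, Set.mem_preimage, hD, Set.mem_setOf_eq]
    refine forall₂_congr fun s' hs' => ?_
    rw [Finset.sum_congr rfl fun u hu => hgX ω u (by
      simp only [Finset.mem_range] at hu; omega)]
  have harm : ∀ ω, beArm Z1 B E t ω = true ↔ ω ∈ A := by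
    intro ω
    rw [hAiff]
    simp only [beArm, beS, hdiv, hmod, decide_eq_true_eq]
    split_ifs with h
    · rw [le_min_iff]
      constructor
      · rintro ⟨h1, _⟩ s' hs'
        exact lt_of_not_ge (Nat.find_min h (lt_of_lt_of_le hs' h1))
      · intro hall
        refine ⟨?_, by omega⟩
        by_contra hlt
        push_neg at hlt
        exact absurd (Nat.find_spec h) (not_le.mpr (hall _ hlt))
    · constructor
      · intro _ s' _
        by_contra hle
        push_neg at hle
        exact h ⟨s', hle⟩
      · intro _; omega
  have hInt1 : Integrable (Z1 t) P := by
    refine Integrable.mono' (integrable_const 1) (hmeas1 t).aestronglyMeasurable ?_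
    filter_upwards with ω
    rw [Real.norm_eq_abs, abs_le]
    exact ⟨(hmem1 t ω).1, (hmem1 t ω).2⟩
  have hInt0 : Integrable (Z0 t) P := by
    refine Integrable.mono' (integrable_const 1) (hmeas0 t).aestronglyMeasurable ?_
    filter_upwards with ω
    rw [Real.norm_eq_abs, abs_le]
    exact ⟨(hmem0 t ω).1, (hmem0 t ω).2⟩
  -- rewrite the reward
  have hrw : (fun ω => beReward Z0 Z1 B E t ω)
      = fun ω => A.indicator (fun _ => (1:ℝ)) ω * Z1 t ω
        + Aᶜ.indicator (fun _ => (1:ℝ)) ω * Z0 t ω := by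
    funext ω
    by_cases hω : ω ∈ A
    · have hb : beArm Z1 B E t ω = true := (harm ω).mpr hω
      simp [beReward, hb, Set.indicator_apply, hω]
    · have hb : beArm Z1 B E t ω ≠ true := fun hb => hω ((harm ω).mp hb)
      simp [beReward, if_neg hb, Set.indicator_apply, hω]
  -- independence
  have htS1 : (true, t) ∉ S := by
    rw [hS, Finset.mem_image]
    rintro ⟨u, hu, heq⟩
    rw [Finset.mem_range] at hu
    have : j * E + 1 + u = t := (Prod.mk.injEq _ _ _ _).mp heq |>.2
    omega
  have htS0 : (false, t) ∉ S := by
    rw [hS, Finset.mem_image]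
    rintro ⟨u, hu, heq⟩
    exact absurd ((Prod.mk.injEq _ _ _ _).mp heq).1 (by simp)
  have hXZ : ∀ b : Bool, IndepFun X (f (b, t)) P := by
    intro b
    have hdisj : Disjoint S ({(b, t)} : Finset (Bool × ℕ)) := by
      rw [Finset.disjoint_singleton_right]
      cases b
      · exact htS0
      · exact htS1
    have h := hindep.indepFun_finset S {(b, t)} hdisj hfmeas
    have h2 := h.comp measurable_id
      (measurable_pi_apply (⟨(b, t), Finset.mem_singleton_self _⟩ :
        (({(b, t)} : Finset (Bool × ℕ)) : Type)))
    exact h2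
  have hIndFun : ∀ (C : Set (S → ℝ)), MeasurableSet C → ∀ b : Bool,
      IndepFun ((X ⁻¹' C).indicator (fun _ => (1:ℝ))) (f (b, t)) P := by
    intro C hC b
    have hphi : Measurable (C.indicator fun _ => (1:ℝ)) :=
      Measurable.indicator measurable_const hC
    have h2 := (hXZ b).comp hphi measurable_id
    have heq : (C.indicator (fun _ => (1:ℝ))) ∘ X
        = (X ⁻¹' C).indicator (fun _ => (1:ℝ)) := by
      funext ω
      by_cases hω : X ω ∈ C <;>
        simp [Function.comp, Set.indicator_apply, hω, Set.mem_preimage]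
    rwa [heq] at h2
  have hZ1f : Z1 t = f (true, t) := by funext ω; simp [hf]
  have hZ0f : Z0 t = f (false, t) := by funext ω; simp [hf]
  have hIA : IndepFun (A.indicator (fun _ => (1:ℝ))) (Z1 t) P := by
    rw [hZ1f]; exact hIndFun D hDmeas true
  have hIAc : IndepFun (Aᶜ.indicator (fun _ => (1:ℝ))) (Z0 t) P := by
    have : Aᶜ = X ⁻¹' Dᶜ := by rw [hA, Set.preimage_compl]
    rw [hZ0f, this]; exact hIndFun Dᶜ hDmeas.compl false
  have hindic1 : Integrable (A.indicator (fun _ => (1:ℝ))) P :=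
    (integrable_const (1:ℝ)).indicator hAmeas
  have hindic0 : Integrable (Aᶜ.indicator (fun _ => (1:ℝ))) P :=
    (integrable_const (1:ℝ)).indicator hAmeas.compl
  have hprod1 : (fun ω => A.indicator (fun _ => (1:ℝ)) ω * Z1 t ω) = A.indicator (Z1 t) := by
    funext ω; by_cases hω : ω ∈ A <;> simp [Set.indicator_apply, hω]
  have hprod0 : (fun ω => Aᶜ.indicator (fun _ => (1:ℝ)) ω * Z0 t ω)
      = Aᶜ.indicator (Z0 t) := by
    funext ω; by_cases hω : ω ∈ Aᶜ <;> simp [Set.indicator_apply, hω]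
  have hI1 : ∫ ω, A.indicator (fun _ => (1:ℝ)) ω * Z1 t ω ∂P
      = (P A).toReal * ∫ ω, Z1 t ω ∂P := by
    calc ∫ ω, A.indicator (fun _ => (1:ℝ)) ω * Z1 t ω ∂P
        = (∫ ω, A.indicator (fun _ => (1:ℝ)) ω ∂P) * ∫ ω, Z1 t ω ∂P :=
          hIA.integral_fun_mul_eq_mul_integral hindic1.aestronglyMeasurable hInt1.aestronglyMeasurable
      _ = (P A).toReal * ∫ ω, Z1 t ω ∂P := by
          rw [integral_indicator_const (1:ℝ) hAmeas, smul_eq_mul, mul_one, measureReal_def]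
  have hI0 : ∫ ω, Aᶜ.indicator (fun _ => (1:ℝ)) ω * Z0 t ω ∂P = 0 := by
    calc ∫ ω, Aᶜ.indicator (fun _ => (1:ℝ)) ω * Z0 t ω ∂P
        = (∫ ω, Aᶜ.indicator (fun _ => (1:ℝ)) ω ∂P) * ∫ ω, Z0 t ω ∂P :=
          hIAc.integral_fun_mul_eq_mul_integral hindic0.aestronglyMeasurable hInt0.aestronglyMeasurable
      _ = 0 := by rw [hmean0, mul_zero]
  refine ⟨(P A).toReal, ENNReal.toReal_nonneg, ?_, ?_⟩
  · have h1 : P A ≤ 1 := prob_le_one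
    have h2 := ENNReal.toReal_mono ENNReal.one_ne_top h1
    simpa using h2
  · rw [hrw, integral_add (by rw [hprod1]; exact hInt1.indicator hAmeas)
      (by rw [hprod0]; exact hInt0.indicator hAmeas.compl), hI1, hI0, add_zero]

/-- **Regret on crossing epochs, β = 1 (Lemma 6).**
One-armed setting over horizon `T = m·E`, `Δ = 1/m`, mean rewards `r(t) = μ(t/T)`.
If `μ` is `L`-Lipschitz on `[0,1]` and `μ(xc) = 0` for some `xc` in the epoch interval
`[x_j, x_{j+1}] = [jΔ, (j+1)Δ]`, then the regret of `BE(B, Δ)` on epoch `j` is at most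
`2LΔ²T`. -/
theorem regret_crossing_epoch_beta_one
    {Ω : Type*} [MeasurableSpace Ω] (P : Measure Ω) [IsProbabilityMeasure P]
    (T E m j : ℕ) (B Δ L : ℝ) (μ : ℝ → ℝ) (Z0 Z1 : ℕ → Ω → ℝ)
    (hE : 1 ≤ E) (hm : 1 ≤ m) (hT : T = m * E) (hj : j < m)
    (hΔ : Δ = (m : ℝ)⁻¹)
    (hB : 1 ≤ B)
    (hL : 0 < L)
    (hlip : LipschitzOnWith L.toNNReal μ (Set.Icc (0:ℝ) 1))
    (hcross : ∃ xc ∈ Set.Icc ((j : ℝ) * Δ) (((j : ℝ) + 1) * Δ), μ xc = 0)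
    (hmeas0 : ∀ t, Measurable (Z0 t)) (hmeas1 : ∀ t, Measurable (Z1 t))
    (hmem0 : ∀ t ω, Z0 t ω ∈ Set.Icc (-1:ℝ) 1) (hmem1 : ∀ t ω, Z1 t ω ∈ Set.Icc (-1:ℝ) 1)
    (hmean0 : ∀ t, ∫ ω, Z0 t ω ∂P = 0)
    (hmean1 : ∀ t, 1 ≤ t → t ≤ T → ∫ ω, Z1 t ω ∂P = μ ((t : ℝ) / T))
    (hindep : ProbabilityTheory.iIndepFun
      (fun p : Bool × ℕ => fun ω => if p.1 then Z1 p.2 ω else Z0 p.2 ω) P) :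
    ∑ t ∈ Finset.Icc (j * E + 1) ((j + 1) * E),
      (max (μ ((t : ℝ) / T)) 0 - ∫ ω, beReward Z0 Z1 B E t ω ∂P) ≤ 2 * L * Δ ^ 2 * T := by
  obtain ⟨xc, hxc, hμxc⟩ := hcross
  have hm0 : (0:ℝ) < m := by exact_mod_cast hm
  have hE0 : (0:ℝ) < E := by exact_mod_cast hE
  have hT0 : (0:ℝ) < T := by
    have : 1 ≤ T := by rw [hT]; exact Nat.one_le_iff_ne_zero.mpr (by positivity)
    exact_mod_cast this
  have hΔ0 : 0 < Δ := by rw [hΔ]; positivity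
  have hΔT : Δ * T = E := by
    rw [hΔ, hT]
    push_cast
    field_simp
  have hsub : Set.Icc ((j : ℝ) * Δ) (((j : ℝ) + 1) * Δ) ⊆ Set.Icc (0:ℝ) 1 := by
    apply Set.Icc_subset_Icc
    · positivity
    · rw [hΔ, mul_inv_le_iff₀ hm0]
      have hjm : (j : ℝ) + 1 ≤ m := by exact_mod_cast hj
      linarith
  have key : ∀ t ∈ Finset.Icc (j * E + 1) ((j + 1) * E),
      max (μ ((t : ℝ) / T)) 0 - ∫ ω, beReward Z0 Z1 B E t ω ∂P ≤ L * Δ := by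
    intro t ht
    rw [Finset.mem_Icc] at ht
    obtain ⟨p, hp0, hp1, hint⟩ := be_integral_eq P E j t B Z0 Z1 hE ht.1 ht.2
      hmeas0 hmeas1 hmem0 hmem1 (hmean0 t) hindep
    have ht1 : 1 ≤ t := by omega
    have htT : t ≤ T := by
      rw [hT]
      calc t ≤ (j + 1) * E := ht.2
        _ ≤ m * E := Nat.mul_le_mul_right _ (by omega)
    rw [hint, hmean1 t ht1 htT]
    have hx1 : (t : ℝ) / T ∈ Set.Icc ((j : ℝ) * Δ) (((j : ℝ) + 1) * Δ) := by
      constructor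
      · rw [le_div_iff₀ hT0, mul_assoc, hΔT]
        have h : j * E ≤ t := by omega
        exact_mod_cast h
      · rw [div_le_iff₀ hT0, mul_assoc, hΔT]
        have h : t ≤ (j + 1) * E := ht.2
        exact_mod_cast h
    have hy : |μ ((t : ℝ) / T)| ≤ L * Δ := by
      have hd := hlip.dist_le_mul _ (hsub hx1) _ (hsub hxc)
      rw [hμxc, Real.dist_eq, sub_zero] at hd
      have hdx : dist ((t : ℝ) / T) xc ≤ Δ := by
        have := Real.dist_le_of_mem_Icc hx1 hxc
        calc dist ((t : ℝ) / T) xc ≤ ((j : ℝ) + 1) * Δ - (j : ℝ) * Δ := this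
          _ = Δ := by ring
      calc |μ ((t : ℝ) / T)| ≤ (L.toNNReal : ℝ) * dist ((t : ℝ) / T) xc := hd
        _ = L * dist ((t : ℝ) / T) xc := by rw [Real.coe_toNNReal L hL.le]
        _ ≤ L * Δ := by nlinarith [dist_nonneg (x := (t : ℝ) / T) (y := xc)]
    have habs := abs_le.mp hy
    rcases le_total 0 (μ ((t : ℝ) / T)) with hpos | hneg
    · rw [max_eq_left hpos]
      nlinarith
    · rw [max_eq_right hneg]
      nlinarith
  have hcard : (Finset.Icc (j * E + 1) ((j + 1) * E)).card = E := by
    have hje : (j + 1) * E = j * E + E := by ring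
    rw [Nat.card_Icc]
    omega
  calc ∑ t ∈ Finset.Icc (j * E + 1) ((j + 1) * E),
      (max (μ ((t : ℝ) / T)) 0 - ∫ ω, beReward Z0 Z1 B E t ω ∂P)
      ≤ (Finset.Icc (j * E + 1) ((j + 1) * E)).card • (L * Δ) :=
        Finset.sum_le_card_nsmul _ _ _ key
    _ = (E : ℝ) * (L * Δ) := by rw [hcard, nsmul_eq_mul]
    _ = L * Δ * (Δ * T) := by rw [hΔT]; ring
    _ ≤ 2 * L * Δ ^ 2 * T := by
        have hnn : (0:ℝ) ≤ L * Δ ^ 2 * T := by positivity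
        nlinarith
end

section
/- In the one-armed bandit setting with r(t) = μ(t/T), suppose μ : [0,1] → ℝ is differentiable with L-Lipschitz derivative μ'. Let j be a crossing epoch, i.e. μ(x̃) = 0 for some x̃ ∈ [x_j, x_{j+1}], and let j + ℓ (with ℓ ∈ ℤ possibly negative or zero) be a stationary epoch, i.e. μ'(s) = 0 for some s ∈ [x_{j+ℓ}, x_{j+ℓ+1}] ⊆ [0,1]. Then the regret of BE(B, Δ) on epoch j satisfies E[∑_{t=t_j}^{t_{j+1}} R_t] ≤ 2L·(|ℓ| + 1)·Δ³T. -/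
open MeasureTheory

lemma beS_le_iff {Ω : Type*} (Z1 : ℕ → Ω → ℝ) (B : ℝ) (E j k : ℕ) (hk : k < E) (ω : Ω) :
    k ≤ beS Z1 B E j ω ↔
      ∀ s < k, -B < ∑ u ∈ Finset.range (s + 1), Z1 (j * E + 1 + u) ω := by
  classical
  unfold beS
  split_ifs with h
  · constructor
    · intro hle s hs
      by_contra hc
      push_neg at hc
      have h1 : Nat.find h ≤ s := Nat.find_le hc
      have h2 : k ≤ Nat.find h := le_trans hle (min_le_left _ _)
      omega
    · intro hall
      refine le_min ?_ (by omega)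
      by_contra hc
      push_neg at hc
      exact absurd (Nat.find_spec h) (not_le.2 (hall _ hc))
  · constructor
    · intro _ s hs
      by_contra hc
      push_neg at hc
      exact h ⟨s, hc⟩
    · intro _; omega

lemma mean_beReward {Ω : Type*} [MeasurableSpace Ω] (P : Measure Ω) [IsProbabilityMeasure P]
    (E j t : ℕ) (B : ℝ) (Z0 Z1 : ℕ → Ω → ℝ)
    (ht1 : j * E + 1 ≤ t) (ht2 : t ≤ (j + 1) * E)
    (hmeas0 : ∀ t, Measurable (Z0 t)) (hmeas1 : ∀ t, Measurable (Z1 t))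
    (hmem0 : ∀ t ω, Z0 t ω ∈ Set.Icc (-1:ℝ) 1) (hmem1 : ∀ t ω, Z1 t ω ∈ Set.Icc (-1:ℝ) 1)
    (hmean0 : ∀ t, ∫ ω, Z0 t ω ∂P = 0)
    (hindep : ProbabilityTheory.iIndepFun
      (fun p : Bool × ℕ => fun ω => if p.1 then Z1 p.2 ω else Z0 p.2 ω) P) :
    ∃ p : ℝ, 0 ≤ p ∧ p ≤ 1 ∧
      ∫ ω, beReward Z0 Z1 B E t ω ∂P = p * ∫ ω, Z1 t ω ∂P := by
  classical
  set k : ℕ := t - (j * E + 1) with hkdef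
  have ht2' : t ≤ j * E + E := by rw [add_mul, one_mul] at ht2; omega
  have hcomm : E * j = j * E := Nat.mul_comm E j
  have hk : k < E := by omega
  have ht' : t - 1 = E * j + k := by omega
  have hdiv : (t - 1) / E = j := by
    rw [ht', Nat.mul_add_div (by omega), Nat.div_eq_of_lt hk, add_zero]
  have hmod : (t - 1) % E = k := by
    rw [ht', Nat.mul_add_mod, Nat.mod_eq_of_lt hk]
  set f : Bool × ℕ → Ω → ℝ := fun p ω => if p.1 then Z1 p.2 ω else Z0 p.2 ω with hfdef
  have hf_meas : ∀ p, Measurable (f p) := by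
    rintro ⟨b, n⟩
    cases b
    · simpa [hfdef] using hmeas0 n
    · simpa [hfdef] using hmeas1 n
  set A : Set Ω :=
    {ω | ∀ s < k, -B < ∑ u ∈ Finset.range (s + 1), Z1 (j * E + 1 + u) ω} with hAdef
  set I : Ω → ℝ := A.indicator (fun _ => (1:ℝ)) with hIdef
  have harm : ∀ ω, (beArm Z1 B E t ω = true) ↔ ω ∈ A := by
    intro ω
    rw [beArm, hdiv, hmod, decide_eq_true_iff]
    exact beS_le_iff Z1 B E j k hk ω
  have hbeR : ∀ ω, beReward Z0 Z1 B E t ω = I ω * Z1 t ω + (1 - I ω) * Z0 t ω := by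
    intro ω
    by_cases hA : ω ∈ A
    · rw [beReward, if_pos ((harm ω).2 hA), hIdef, Set.indicator_of_mem hA]
      ring
    · have : beArm Z1 B E t ω ≠ true := fun hc => hA ((harm ω).1 hc)
      rw [beReward, if_neg this, hIdef, Set.indicator_of_notMem hA]
      ring
  have hA_meas : MeasurableSet A := by
    have : A = ⋂ s ∈ Finset.range k,
        {ω | -B < ∑ u ∈ Finset.range (s + 1), Z1 (j * E + 1 + u) ω} := by
      ext ω; simp [hAdef]
    rw [this]
    exact MeasurableSet.biInter (Finset.range k).countable_toSet
      (fun s _ => measurableSet_lt measurable_const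
        (Finset.measurable_sum _ fun u _ => hmeas1 _))
  have hImeas : Measurable I := measurable_const.indicator hA_meas
  have hI01 : ∀ ω, 0 ≤ I ω ∧ I ω ≤ 1 := by
    intro ω
    rw [hIdef, Set.indicator_apply]
    split_ifs <;> norm_num
  -- integrability helper
  have hint : ∀ (g : Ω → ℝ), Measurable g → (∀ ω, |g ω| ≤ 1) → Integrable g P := by
    intro g hg hb
    exact ⟨hg.aestronglyMeasurable,
      HasFiniteIntegral.of_bounded (C := 1)
        (Filter.Eventually.of_forall (by simpa [Real.norm_eq_abs] using hb))⟩
  have habs1 : ∀ ω, |Z1 t ω| ≤ 1 := fun ω => abs_le.2 ⟨(hmem1 t ω).1, (hmem1 t ω).2⟩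
  have habs0 : ∀ ω, |Z0 t ω| ≤ 1 := fun ω => abs_le.2 ⟨(hmem0 t ω).1, (hmem0 t ω).2⟩
  have habsI : ∀ ω, |I ω| ≤ 1 := fun ω =>
    abs_le.2 ⟨le_trans (by norm_num) (hI01 ω).1, (hI01 ω).2⟩
  have hZ1int : Integrable (Z1 t) P := hint _ (hmeas1 t) habs1
  have hZ0int : Integrable (Z0 t) P := hint _ (hmeas0 t) habs0
  have hIint : Integrable I P := hint _ hImeas habsI
  -- independence
  set S : Finset (Bool × ℕ) :=
    (Finset.range k).image (fun u => (true, j * E + 1 + u)) with hSdef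
  have key : ∀ (b : Bool) (n : ℕ), (b, n) ∉ S →
      ∀ (φ : ({x // x ∈ S} → ℝ) → ℝ), Measurable φ →
      ProbabilityTheory.IndepFun (fun ω => φ (fun i => f i.1 ω)) (f (b, n)) P := by
    intro b n hbn φ hφ
    have hdisj : Disjoint S ({(b, n)} : Finset (Bool × ℕ)) :=
      Finset.disjoint_singleton_right.2 hbn
    have h1 := hindep.indepFun_finset S {(b, n)} hdisj hf_meas
    have h2 := h1.comp hφ
      (measurable_pi_apply
        (⟨(b, n), Finset.mem_singleton_self _⟩ : {x // x ∈ ({(b, n)} : Finset (Bool × ℕ))}))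
    exact h2
  set w : ({x // x ∈ S} → ℝ) → ℕ → ℝ := fun v u =>
    if h : (true, j * E + 1 + u) ∈ S then v ⟨(true, j * E + 1 + u), h⟩ else 0 with hwdef
  set g : ({x // x ∈ S} → ℝ) → ℝ :=
    Set.indicator {v | ∀ s < k, -B < ∑ u ∈ Finset.range (s + 1), w v u}
      (fun _ => (1:ℝ)) with hgdef
  have hw_meas : ∀ u, Measurable fun v : {x // x ∈ S} → ℝ => w v u := by
    intro u
    rw [hwdef]
    by_cases h : (true, j * E + 1 + u) ∈ S
    · simpa [h] using measurable_pi_apply (⟨(true, j * E + 1 + u), h⟩ : {x // x ∈ S})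
    · simpa [h] using (measurable_const : Measurable fun _ : {x // x ∈ S} → ℝ => (0:ℝ))
  have hg_meas : Measurable g := by
    rw [hgdef]
    refine Measurable.indicator measurable_const ?_
    have : {v : {x // x ∈ S} → ℝ | ∀ s < k, -B < ∑ u ∈ Finset.range (s + 1), w v u}
        = ⋂ s ∈ Finset.range k, {v | -B < ∑ u ∈ Finset.range (s + 1), w v u} := by
      ext v; simp
    rw [this]
    exact MeasurableSet.biInter (Finset.range k).countable_toSet
      (fun s _ => measurableSet_lt measurable_const
        (Finset.measurable_sum _ fun u _ => hw_meas u))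
  have hg_comp : (fun ω => g (fun i : {x // x ∈ S} => f i.1 ω)) = I := by
    funext ω
    have hsum : ∀ s < k, ∑ u ∈ Finset.range (s + 1), w (fun i => f i.1 ω) u
        = ∑ u ∈ Finset.range (s + 1), Z1 (j * E + 1 + u) ω := by
      intro s hs
      refine Finset.sum_congr rfl fun u hu => ?_
      have hu' : u < k := by
        have := Finset.mem_range.1 hu; omega
      have hmem : (true, j * E + 1 + u) ∈ S :=
        Finset.mem_image.2 ⟨u, Finset.mem_range.2 hu', rfl⟩
      simp [hwdef, hmem, hfdef]
    have hcond : ((fun i : {x // x ∈ S} => f i.1 ω)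
        ∈ {v | ∀ s < k, -B < ∑ u ∈ Finset.range (s + 1), w v u}) ↔ ω ∈ A := by
      simp only [Set.mem_setOf_eq, hAdef]
      constructor
      · intro h s hs; have := h s hs; rwa [hsum s hs] at this
      · intro h s hs; rw [hsum s hs]; exact h s hs
    rw [hgdef, hIdef, Set.indicator_apply, Set.indicator_apply, if_congr hcond rfl rfl]
  have hfT : f (true, t) = Z1 t := by funext ω; simp [hfdef]
  have hfF : f (false, t) = Z0 t := by funext ω; simp [hfdef]
  have hnotT : (true, t) ∉ S := by
    simp only [hSdef, Finset.mem_image, Finset.mem_range, not_exists]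
    rintro u ⟨hu, huv⟩
    have : j * E + 1 + u = t := congrArg Prod.snd huv
    omega
  have hnotF : (false, t) ∉ S := by
    simp only [hSdef, Finset.mem_image, Finset.mem_range, not_exists]
    rintro u ⟨hu, huv⟩
    exact Bool.true_eq_false.mp (congrArg Prod.fst huv)
  have hI1 : ProbabilityTheory.IndepFun I (Z1 t) P := by
    have := key true t hnotT g hg_meas
    rwa [hg_comp, hfT] at this
  have hI0 : ProbabilityTheory.IndepFun (fun ω => 1 - I ω) (Z0 t) P := by
    have h3 := key false t hnotF (fun v => 1 - g v) (measurable_const.sub hg_meas)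
    rw [hfF] at h3
    have h4 : (fun ω => 1 - g (fun i : {x // x ∈ S} => f i.1 ω)) = fun ω => 1 - I ω := by
      funext ω; rw [← congrFun hg_comp ω]
    rwa [h4] at h3
  -- integrals
  have hprod1 : (∫ ω, I ω * Z1 t ω ∂P) = (∫ ω, I ω ∂P) * ∫ ω, Z1 t ω ∂P :=
    hI1.integral_fun_mul_eq_mul_integral hIint.aestronglyMeasurable hZ1int.aestronglyMeasurable
  have hprod0 : (∫ ω, (1 - I ω) * Z0 t ω ∂P) = 0 := by
    rw [hI0.integral_fun_mul_eq_mul_integral ((integrable_const (1:ℝ)).sub hIint).aestronglyMeasurable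
      hZ0int.aestronglyMeasurable, hmean0 t, mul_zero]
  have hint1 : Integrable (fun ω => I ω * Z1 t ω) P := by
    refine hint _ (hImeas.mul (hmeas1 t)) fun ω => ?_
    rw [abs_mul]
    calc |I ω| * |Z1 t ω| ≤ 1 * 1 := mul_le_mul (habsI ω) (habs1 ω) (abs_nonneg _) zero_le_one
    _ = 1 := by norm_num
  have hint0 : Integrable (fun ω => (1 - I ω) * Z0 t ω) P := by
    refine hint _ ((measurable_const.sub hImeas).mul (hmeas0 t)) fun ω => ?_
    rw [abs_mul]
    have : |1 - I ω| ≤ 1 := by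
      rcases hI01 ω with ⟨h0, h1⟩
      rw [abs_le]; constructor <;> linarith
    calc |1 - I ω| * |Z0 t ω| ≤ 1 * 1 := mul_le_mul this (habs0 ω) (abs_nonneg _) zero_le_one
    _ = 1 := by norm_num
  refine ⟨∫ ω, I ω ∂P, integral_nonneg fun ω => (hI01 ω).1, ?_, ?_⟩
  · have h5 : (∫ ω, I ω ∂P) ≤ ∫ _, (1:ℝ) ∂P :=
      integral_mono hIint (integrable_const 1) fun ω => (hI01 ω).2
    simpa using h5
  · calc ∫ ω, beReward Z0 Z1 B E t ω ∂P
        = ∫ ω, (I ω * Z1 t ω + (1 - I ω) * Z0 t ω) ∂P := by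
          exact integral_congr_ae (Filter.Eventually.of_forall hbeR)
    _ = (∫ ω, I ω * Z1 t ω ∂P) + ∫ ω, (1 - I ω) * Z0 t ω ∂P := integral_add hint1 hint0
    _ = (∫ ω, I ω ∂P) * ∫ ω, Z1 t ω ∂P := by rw [hprod1, hprod0, add_zero]

/-- **Key lemma: regret on crossing epochs, β = 2 (Lemma 7).**
One-armed setting over horizon `T = m·E`, `Δ = 1/m`, mean rewards `r(t) = μ(t/T)`, where
`μ` is differentiable on `[0,1]` with derivative `μ'` that is `L`-Lipschitz on `[0,1]`.
Suppose epoch `j` is a crossing epoch (`μ(xc) = 0` for some `xc ∈ [x_j, x_{j+1}]`) and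
epoch `j + ℓ` (with `ℓ ∈ ℤ` possibly negative or zero) is a stationary epoch
(`μ'(s) = 0` for some `s ∈ [x_{j+ℓ}, x_{j+ℓ+1}] ⊆ [0,1]`).  Then the regret of
`BE(B, Δ)` on epoch `j` is at most `2L·(|ℓ| + 1)·Δ³T`. -/
theorem regret_crossing_epoch_beta_two
    {Ω : Type*} [MeasurableSpace Ω] (P : Measure Ω) [IsProbabilityMeasure P]
    (T E m j : ℕ) (ℓ : ℤ) (B Δ L : ℝ) (μ μ' : ℝ → ℝ) (Z0 Z1 : ℕ → Ω → ℝ)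
    (hE : 1 ≤ E) (hm : 1 ≤ m) (hT : T = m * E) (hj : j < m)
    (hΔ : Δ = (m : ℝ)⁻¹)
    (hB : 1 ≤ B)
    (hL : 0 < L)
    (hderiv : ∀ x ∈ Set.Icc (0:ℝ) 1, HasDerivWithinAt μ (μ' x) (Set.Icc (0:ℝ) 1) x)
    (hlip : LipschitzOnWith L.toNNReal μ' (Set.Icc (0:ℝ) 1))
    (hcross : ∃ xc ∈ Set.Icc ((j : ℝ) * Δ) (((j : ℝ) + 1) * Δ), μ xc = 0)
    (hsub : Set.Icc (((j : ℝ) + (ℓ : ℝ)) * Δ) (((j : ℝ) + (ℓ : ℝ) + 1) * Δ) ⊆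
      Set.Icc (0:ℝ) 1)
    (hstat : ∃ s ∈ Set.Icc (((j : ℝ) + (ℓ : ℝ)) * Δ) (((j : ℝ) + (ℓ : ℝ) + 1) * Δ),
      μ' s = 0)
    (hmeas0 : ∀ t, Measurable (Z0 t)) (hmeas1 : ∀ t, Measurable (Z1 t))
    (hmem0 : ∀ t ω, Z0 t ω ∈ Set.Icc (-1:ℝ) 1) (hmem1 : ∀ t ω, Z1 t ω ∈ Set.Icc (-1:ℝ) 1)
    (hmean0 : ∀ t, ∫ ω, Z0 t ω ∂P = 0)
    (hmean1 : ∀ t, 1 ≤ t → t ≤ T → ∫ ω, Z1 t ω ∂P = μ ((t : ℝ) / T))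
    (hindep : ProbabilityTheory.iIndepFun
      (fun p : Bool × ℕ => fun ω => if p.1 then Z1 p.2 ω else Z0 p.2 ω) P) :
    ∑ t ∈ Finset.Icc (j * E + 1) ((j + 1) * E),
      (max (μ ((t : ℝ) / T)) 0 - ∫ ω, beReward Z0 Z1 B E t ω ∂P) ≤
      2 * L * ((|ℓ| : ℝ) + 1) * Δ ^ 3 * T := by
  obtain ⟨xc, hxc, hμxc⟩ := hcross
  obtain ⟨s, hs, hμ's⟩ := hstat
  have hm0 : (0:ℝ) < m := by exact_mod_cast hm
  have hE0 : (0:ℝ) < E := by exact_mod_cast hE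
  have hΔ0 : 0 < Δ := by rw [hΔ]; positivity
  have hTr : (T:ℝ) = m * E := by rw [hT]; push_cast; ring
  have hT0 : (0:ℝ) < T := by rw [hTr]; positivity
  have hjm : (j:ℝ) + 1 ≤ m := by exact_mod_cast hj
  have hΔm : Δ * m = 1 := by rw [hΔ]; field_simp
  have hla : (0:ℝ) ≤ ((|ℓ| : ℤ) : ℝ) := by exact_mod_cast abs_nonneg ℓ
  have hcast : ((|ℓ| : ℤ) : ℝ) = |(ℓ:ℝ)| := by push_cast; ring
  have hIccsub : Set.Icc ((j:ℝ)*Δ) (((j:ℝ)+1)*Δ) ⊆ Set.Icc (0:ℝ) 1 := by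
    intro x hx
    constructor
    · have : (0:ℝ) ≤ (j:ℝ)*Δ := by positivity
      linarith [hx.1]
    · have h1 : ((j:ℝ)+1)*Δ ≤ m*Δ := by nlinarith [hΔ0.le]
      have h2 : (m:ℝ)*Δ = 1 := by linarith [hΔm]
      linarith [hx.2]
  set C : ℝ := L * (((|ℓ| : ℤ) : ℝ) + 1) * Δ with hCdef
  have hC0 : 0 ≤ C := by
    rw [hCdef]
    have : (0:ℝ) ≤ ((|ℓ| : ℤ) : ℝ) + 1 := by linarith
    positivity
  have hsmem : s ∈ Set.Icc (0:ℝ) 1 := hsub hs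
  have hderivb : ∀ ξ ∈ Set.Icc ((j:ℝ)*Δ) (((j:ℝ)+1)*Δ), ‖μ' ξ‖ ≤ C := by
    intro ξ hξ
    have hξ01 := hIccsub hξ
    have h1 : dist (μ' ξ) (μ' s) ≤ L * dist ξ s := by
      have := hlip.dist_le_mul ξ hξ01 s hsmem
      rwa [Real.coe_toNNReal L hL.le] at this
    have h2 : dist ξ s ≤ (((|ℓ| : ℤ) : ℝ) + 1) * Δ := by
      rw [Real.dist_eq, abs_le, hcast]
      obtain ⟨hs1, hs2⟩ := hs
      obtain ⟨hξ1, hξ2⟩ := hξ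
      constructor <;> nlinarith [hΔ0.le, le_abs_self (ℓ:ℝ), neg_abs_le (ℓ:ℝ)]
    calc ‖μ' ξ‖ = dist (μ' ξ) (μ' s) := by rw [hμ's, dist_zero_right]
    _ ≤ L * dist ξ s := h1
    _ ≤ L * ((((|ℓ| : ℤ) : ℝ) + 1) * Δ) := mul_le_mul_of_nonneg_left h2 hL.le
    _ = C := by rw [hCdef]; ring
  have hμb : ∀ x ∈ Set.Icc ((j:ℝ)*Δ) (((j:ℝ)+1)*Δ), |μ x| ≤ C * Δ := by
    intro x hx
    have hmvt := (convex_Icc ((j:ℝ)*Δ) (((j:ℝ)+1)*Δ)).norm_image_sub_le_of_norm_hasDerivWithin_le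
      (fun y hy => (hderiv y (hIccsub hy)).mono hIccsub) hderivb hxc hx
    rw [hμxc, sub_zero] at hmvt
    have hxxc : ‖x - xc‖ ≤ Δ := by
      rw [Real.norm_eq_abs, abs_le]
      constructor <;> [linarith [hx.1, hxc.2]; linarith [hx.2, hxc.1]]
    calc |μ x| = ‖μ x‖ := (Real.norm_eq_abs _).symm
    _ ≤ C * ‖x - xc‖ := hmvt
    _ ≤ C * Δ := mul_le_mul_of_nonneg_left hxxc hC0
  have hterm : ∀ t ∈ Finset.Icc (j * E + 1) ((j + 1) * E),
      max (μ ((t : ℝ) / T)) 0 - (∫ ω, beReward Z0 Z1 B E t ω ∂P) ≤ C * Δ := by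
    intro t ht
    rw [Finset.mem_Icc] at ht
    obtain ⟨p, hp0, hp1, hpe⟩ := mean_beReward P E j t B Z0 Z1 ht.1 ht.2
      hmeas0 hmeas1 hmem0 hmem1 hmean0 hindep
    have htT : t ≤ T := by
      rw [hT]; exact le_trans ht.2 (Nat.mul_le_mul_right E hj)
    rw [hpe, hmean1 t (by omega) htT]
    have hlow : (j:ℝ) * E ≤ t := by
      have : (j * E : ℕ) ≤ t := by omega
      exact_mod_cast this
    have hhigh : (t:ℝ) ≤ ((j:ℝ) + 1) * E := by exact_mod_cast ht.2
    have hmem' : (t:ℝ)/T ∈ Set.Icc ((j:ℝ)*Δ) (((j:ℝ)+1)*Δ) := by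
      constructor
      · rw [le_div_iff₀ hT0, hTr]
        have : (j:ℝ)*Δ*(m*E) = (j:ℝ)*E := by
          rw [show (j:ℝ)*Δ*(m*E) = (j:ℝ)*E*(Δ*m) by ring, hΔm, mul_one]
        linarith
      · rw [div_le_iff₀ hT0, hTr]
        have : ((j:ℝ)+1)*Δ*(m*E) = ((j:ℝ)+1)*E := by
          rw [show ((j:ℝ)+1)*Δ*(m*E) = ((j:ℝ)+1)*E*(Δ*m) by ring, hΔm, mul_one]
        linarith
    have hb := hμb _ hmem'
    set r := μ ((t:ℝ)/T) with hrdef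
    rcases le_total r 0 with h | h
    · rw [max_eq_right h]
      rw [abs_of_nonpos h] at hb
      have h2 : p * (-r) ≤ 1 * (-r) := mul_le_mul_of_nonneg_right hp1 (by linarith)
      linarith
    · rw [max_eq_left h]
      rw [abs_of_nonneg h] at hb
      have h2 : 0 ≤ p * r := mul_nonneg hp0 h
      linarith
  have hcard : ((j + 1) * E + 1 - (j * E + 1)) = E := by
    rw [add_mul, one_mul]; omega
  calc ∑ t ∈ Finset.Icc (j * E + 1) ((j + 1) * E),
      (max (μ ((t : ℝ) / T)) 0 - ∫ ω, beReward Z0 Z1 B E t ω ∂P)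
      ≤ ∑ _t ∈ Finset.Icc (j * E + 1) ((j + 1) * E), C * Δ := Finset.sum_le_sum hterm
  _ = (E : ℝ) * (C * Δ) := by
      rw [Finset.sum_const, Nat.card_Icc, hcard, nsmul_eq_mul]
  _ = L * (((|ℓ| : ℤ) : ℝ) + 1) * (Δ^2 * E) := by rw [hCdef]; ring
  _ ≤ 2 * L * (((|ℓ| : ℤ) : ℝ) + 1) * (Δ^2 * E) := by
      have hnn : (0:ℝ) ≤ L * (((|ℓ| : ℤ) : ℝ) + 1) * (Δ^2 * E) := by
        have : (0:ℝ) ≤ ((|ℓ| : ℤ) : ℝ) + 1 := by linarith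
        positivity
      linarith
  _ = 2 * L * ((|ℓ| : ℝ) + 1) * Δ ^ 3 * T := by
      rw [hTr, ← hcast]
      linear_combination (-2 * L * (((|ℓ| : ℤ) : ℝ) + 1) * Δ^2 * E) * hΔm
end

section
/- Let w > 0 and let h : [0, w] → ℝ be an integrable base function. Then for all integers ℓ, j ≥ 0, the level-ℓ anti-derivative of the ν^{ℓ+j}-flock of h is itself a ν^j-flock: Φ^ℓ[F_{ν^{ℓ+j}}[h]] = F_{ν^j}[h_ℓ] as functions on [0, 2^{ℓ+j}w], where the base function is h_ℓ = Φ^ℓ[F_{ν^ℓ}[h]] : [0, 2^ℓ w] → ℝ. -/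
open MeasureTheory

/-- The neutralizing vectors: `ν⁰ = (1)` and `ν^k = ν^{k−1} ⊕ (−ν^{k−1}) ∈ {±1}^{2^k}`,
where `⊕` is concatenation.  `nu k` lists the entries of `ν^k` (0-indexed). -/
def nu : ℕ → List ℝ
  | 0 => [1]
  | k + 1 => nu k ++ (nu k).map (fun x => -x)

/-- The `v`-flock of a base function `h : [0, w] → ℝ`: the function `F_v[h] : ℝ → ℝ` that on
each subinterval `[(i−1)w, iw)` (for `i = 1, …, length v`) equals `v_i · h(x − (i−1)w)`
(weighted copies of `h` placed side by side), and vanishes elsewhere. -/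
noncomputable def flock (w : ℝ) (v : List ℝ) (h : ℝ → ℝ) : ℝ → ℝ := fun x =>
  ∑ i ∈ Finset.range v.length,
    if (i : ℝ) * w ≤ x ∧ x < ((i : ℝ) + 1) * w then v.getD i 0 * h (x - (i : ℝ) * w) else 0

/-- The level-`ℓ` anti-derivative: `Φ⁰[f] = f` and `Φ^ℓ[f](x) = ∫_0^x Φ^{ℓ−1}[f](u) du`. -/
noncomputable def antideriv : ℕ → (ℝ → ℝ) → (ℝ → ℝ)
  | 0, f => f
  | ℓ + 1, f => fun x => ∫ u in (0:ℝ)..x, antideriv ℓ f u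

lemma nu_length (k : ℕ) : (nu k).length = 2 ^ k := by
  induction k with
  | zero => rfl
  | succ k ih => simp [nu, ih]; ring

lemma flock_append (W : ℝ) (v₁ v₂ : List ℝ) (g : ℝ → ℝ) (x : ℝ) :
    flock W (v₁ ++ v₂) g x
      = flock W v₁ g x + flock W v₂ g (x - v₁.length * W) := by
  unfold flock
  rw [List.length_append, Finset.sum_range_add]
  congr 1
  · refine Finset.sum_congr rfl fun i hi => ?_
    rw [List.getD_append _ _ _ _ (Finset.mem_range.mp hi)]
  · refine Finset.sum_congr rfl fun i hi => ?_
    rw [List.getD_append_right _ _ _ _ (Nat.le_add_right _ _), Nat.add_sub_cancel_left]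
    have e1 : ((v₁.length + i : ℕ) : ℝ) * W = v₁.length * W + i * W := by push_cast; ring
    have e2 : (((v₁.length + i : ℕ) : ℝ) + 1) * W = v₁.length * W + ((i:ℝ) + 1) * W := by
      push_cast; ring
    refine if_congr ?_ ?_ rfl
    · rw [e1, e2]; constructor <;> rintro ⟨h1, h2⟩ <;> constructor <;> linarith
    · congr 1; push_cast; ring

lemma flock_neg (W : ℝ) (v : List ℝ) (g : ℝ → ℝ) (x : ℝ) :
    flock W (v.map (fun t => -t)) g x = - flock W v g x := by
  unfold flock
  rw [List.length_map, ← Finset.sum_neg_distrib]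
  refine Finset.sum_congr rfl fun i hi => ?_
  have hg : (v.map (fun t => -t)).getD i 0 = -(v.getD i 0) := by
    rcases lt_or_ge i v.length with h | h
    · simp only [List.getD_eq_getElem?_getD, List.getElem?_map]
      cases v[i]? <;> simp
    · rw [List.getD_eq_default _ _ (by simpa using h), List.getD_eq_default _ _ h]; simp
  split_ifs with hc
  · rw [hg]; ring
  · simp

lemma flock_succ (W : ℝ) (k : ℕ) (g : ℝ → ℝ) (x : ℝ) :
    flock W (nu (k+1)) g x
      = flock W (nu k) g x - flock W (nu k) g (x - 2 ^ k * W) := by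
  rw [show nu (k+1) = nu k ++ (nu k).map (fun t => -t) from rfl, flock_append, flock_neg,
    nu_length]
  push_cast
  ring

lemma flock_of_neg (W : ℝ) (hW : 0 < W) (v : List ℝ) (g : ℝ → ℝ) {x : ℝ} (hx : x < 0) :
    flock W v g x = 0 := by
  unfold flock
  refine Finset.sum_eq_zero fun i _ => ?_
  rw [if_neg]
  rintro ⟨h1, -⟩
  have : (0:ℝ) ≤ (i:ℝ) * W := by positivity
  linarith

lemma flock_of_ge (W : ℝ) (hW : 0 < W) (v : List ℝ) (g : ℝ → ℝ) {x : ℝ}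
    (hx : (v.length : ℝ) * W ≤ x) : flock W v g x = 0 := by
  unfold flock
  refine Finset.sum_eq_zero fun i hi => ?_
  rw [if_neg]
  rintro ⟨-, h2⟩
  have hi' : (i:ℝ) + 1 ≤ (v.length : ℝ) := by
    exact_mod_cast Finset.mem_range.mp hi
  nlinarith

lemma flock_at_zero (W : ℝ) (hW : 0 < W) (v : List ℝ) (g : ℝ → ℝ) (hg : g 0 = 0) :
    flock W v g 0 = 0 := by
  unfold flock
  refine Finset.sum_eq_zero fun i _ => ?_
  split_ifs with hc
  · have h0 : (0:ℝ) ≤ (i:ℝ) * W := by positivity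
    have : (i:ℝ) * W = 0 := le_antisymm hc.1 h0
    rw [this, sub_zero, hg, mul_zero]
  · rfl

lemma flock_one (W : ℝ) (g : ℝ → ℝ) (x : ℝ) :
    flock W [(1:ℝ)] g x = if 0 ≤ x ∧ x < W then g x else 0 := by
  unfold flock
  simp

lemma flock_congr (W : ℝ) (v : List ℝ) {g₁ g₂ : ℝ → ℝ}
    (hg : Set.EqOn g₁ g₂ (Set.Ico 0 W)) (x : ℝ) :
    flock W v g₁ x = flock W v g₂ x := by
  unfold flock
  refine Finset.sum_congr rfl fun i _ => ?_
  split_ifs with hc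
  · have e : ((i:ℝ) + 1) * W = (i:ℝ) * W + W := by ring
    rw [hg ⟨by linarith [hc.1], by have := hc.2; rw [e] at this; linarith⟩]
  · rfl

lemma flock_flock_one (W : ℝ) (v : List ℝ) (g : ℝ → ℝ) (x : ℝ) :
    flock W v (flock W [(1:ℝ)] g) x = flock W v g x := by
  show (∑ i ∈ Finset.range v.length,
      if (i : ℝ) * W ≤ x ∧ x < ((i : ℝ) + 1) * W then
        v.getD i 0 * flock W [(1:ℝ)] g (x - (i : ℝ) * W) else 0) = _
  refine Finset.sum_congr rfl fun i _ => ?_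
  split_ifs with hc
  · have e : ((i:ℝ) + 1) * W = (i:ℝ) * W + W := by ring
    rw [flock_one, if_pos ⟨by linarith [hc.1], by have := hc.2; rw [e] at this; linarith⟩]
  · rfl

lemma integral_congr_Ico {f g : ℝ → ℝ} {a b : ℝ} (hab : a ≤ b)
    (h : Set.EqOn f g (Set.Ico a b)) :
    ∫ u in a..b, f u = ∫ u in a..b, g u := by
  apply intervalIntegral.integral_congr_ae
  rw [MeasureTheory.ae_iff]
  refine measure_mono_null (fun u hu => ?_) (measure_singleton b)
  simp only [Set.mem_setOf_eq] at hu
  push_neg at hu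
  obtain ⟨hmem, hne⟩ := hu
  rw [Set.uIoc_of_le hab] at hmem
  by_contra hub
  exact hne (h ⟨le_of_lt hmem.1, lt_of_le_of_ne hmem.2 (by simpa using hub)⟩)

lemma flock_integrable (W : ℝ) (hW : 0 < W) (v : List ℝ) (g : ℝ → ℝ)
    (hg : IntegrableOn g (Set.Icc 0 W)) : Integrable (flock W v g) := by
  have key : flock W v g = fun x => ∑ i ∈ Finset.range v.length,
      Set.indicator (Set.Ico ((i:ℝ)*W) (((i:ℝ)+1)*W))
        (fun x => v.getD i 0 * g (x - (i:ℝ)*W)) x := by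
    funext x
    unfold flock
    refine Finset.sum_congr rfl fun i _ => ?_
    rw [Set.indicator_apply]
    simp [Set.mem_Ico]
  rw [key]
  apply integrable_finset_sum
  intro i _
  rw [integrable_indicator_iff measurableSet_Ico]
  apply Integrable.const_mul
  have h1 : IntervalIntegrable g volume 0 W :=
    (intervalIntegrable_iff_integrableOn_Icc_of_le hW.le).mpr hg
  have h2 := h1.comp_sub_right ((i:ℝ)*W)
  rw [zero_add] at h2
  have h3 : IntegrableOn (fun x => g (x - (i:ℝ)*W)) (Set.Icc ((i:ℝ)*W) (W + (i:ℝ)*W)) :=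
    (intervalIntegrable_iff_integrableOn_Icc_of_le (by linarith [hW.le, mul_nonneg (Nat.cast_nonneg i) hW.le])).mp h2
  refine h3.mono_set fun u hu => ?_
  obtain ⟨hu1, hu2⟩ := hu
  exact ⟨hu1, by nlinarith⟩

lemma flock_nu_one_integral (W : ℝ) (hW : 0 < W) (G : ℝ → ℝ)
    (hG : IntegrableOn G (Set.Icc 0 W)) :
    ∫ u in (0:ℝ)..(2*W), flock W (nu 1) G u = 0 := by
  have hint : ∀ a b : ℝ, IntervalIntegrable (flock W (nu 1) G) volume a b :=
    fun a b => (flock_integrable W hW _ G hG).intervalIntegrable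
  rw [← intervalIntegral.integral_add_adjacent_intervals (hint 0 W) (hint W (2*W))]
  have e1 : ∫ u in (0:ℝ)..W, flock W (nu 1) G u = ∫ u in (0:ℝ)..W, G u := by
    refine integral_congr_Ico hW.le fun u hu => ?_
    rw [flock_succ,
      flock_of_neg W hW _ _ (x := u - 2^0*W) (by simp only [pow_zero, one_mul]; linarith [hu.2]),
      sub_zero, show nu 0 = [(1:ℝ)] from rfl, flock_one, if_pos ⟨hu.1, hu.2⟩]
  have e2 : ∫ u in W..(2*W), flock W (nu 1) G u = ∫ u in W..(2*W), -G (u - W) := by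
    refine integral_congr_Ico (by linarith) fun u hu => ?_
    rw [flock_succ, show nu 0 = [(1:ℝ)] from rfl, flock_one, flock_one,
      if_neg (by rintro ⟨-, h2⟩; linarith [hu.1]),
      if_pos (⟨by simp only [pow_zero, one_mul]; linarith [hu.1],
        by simp only [pow_zero, one_mul]; linarith [hu.2]⟩ :
          0 ≤ u - 2^0*W ∧ u - 2^0*W < W)]
    norm_num
  rw [e1, e2, intervalIntegral.integral_neg,
    intervalIntegral.integral_comp_sub_right (fun u => G u) W, sub_self,
    show 2*W - W = W by ring]
  ring

lemma lemB (W : ℝ) (hW : 0 < W) (G : ℝ → ℝ) (hG : IntegrableOn G (Set.Icc 0 W)) :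
    ∀ j : ℕ, ∀ x ∈ Set.Icc (0:ℝ) (2 ^ (j+1) * W),
      ∫ u in (0:ℝ)..x, flock W (nu (j+1)) G u
        = flock (2*W) (nu j) (fun y => ∫ u in (0:ℝ)..y, flock W (nu 1) G u) x := by
  have hint : ∀ (m : ℕ) (a b : ℝ), IntervalIntegrable (flock W (nu m) G) volume a b :=
    fun m a b => (flock_integrable W hW _ G hG).intervalIntegrable
  intro j
  induction j with
  | zero =>
    rintro x ⟨hx0, hx2⟩
    rcases eq_or_lt_of_le hx2 with heq | hlt
    · subst heq
      rw [show (2:ℝ)^(0+1)*W = 2*W from by norm_num,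
        flock_of_ge (2*W) (by linarith) _ _ (x := 2*W) (by rw [nu_length]; norm_num)]
      exact flock_nu_one_integral W hW G hG
    · rw [show nu 0 = [(1:ℝ)] from rfl, flock_one,
        if_pos ⟨hx0, by rw [show (2:ℝ)^(0+1)*W = 2*W from by norm_num] at hlt; exact hlt⟩]
  | succ j ih =>
    rintro x ⟨hx0, hxt⟩
    set S : ℝ := 2^(j+1) * W with hS
    have hSe : S = 2^(j+1) * W := hS
    have hS0 : 0 < S := by positivity
    have hx2S : x ≤ 2 * S := by
      have e : (2:ℝ)^(j+1+1)*W = 2*(2^(j+1)*W) := by ring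
      linarith [hxt]
    have h2jS : (2:ℝ)^j * (2*W) = S := by rw [hSe]; ring
    rcases le_or_gt x S with hxS | hxS
    · have e1 : ∫ u in (0:ℝ)..x, flock W (nu (j+1+1)) G u
          = ∫ u in (0:ℝ)..x, flock W (nu (j+1)) G u := by
        refine integral_congr_Ico hx0 fun u hu => ?_
        rw [flock_succ,
          flock_of_neg W hW _ _ (x := u - 2^(j+1)*W) (by linarith [hu.2]), sub_zero]
      rw [e1, ih x ⟨hx0, hxS⟩, flock_succ, h2jS]
      rcases lt_or_eq_of_le hxS with h | h
      · rw [flock_of_neg (2*W) (by linarith) _ _ (x := x - S) (by linarith), sub_zero]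
      · rw [h, sub_self,
          flock_at_zero (2*W) (by linarith) _ _ intervalIntegral.integral_same, sub_zero]
    · have split : ∫ u in (0:ℝ)..x, flock W (nu (j+1+1)) G u
          = (∫ u in (0:ℝ)..S, flock W (nu (j+1+1)) G u)
            + ∫ u in S..x, flock W (nu (j+1+1)) G u :=
        (intervalIntegral.integral_add_adjacent_intervals (hint _ 0 S) (hint _ S x)).symm
      have part1 : ∫ u in (0:ℝ)..S, flock W (nu (j+1+1)) G u = 0 := by
        have e1 : ∫ u in (0:ℝ)..S, flock W (nu (j+1+1)) G u
            = ∫ u in (0:ℝ)..S, flock W (nu (j+1)) G u := by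
          refine integral_congr_Ico hS0.le fun u hu => ?_
          rw [flock_succ,
            flock_of_neg W hW _ _ (x := u - 2^(j+1)*W) (by linarith [hu.2]), sub_zero]
        rw [e1, ih S ⟨hS0.le, le_refl S⟩]
        exact flock_of_ge (2*W) (by linarith) _ _
          (by rw [nu_length]; push_cast; rw [h2jS])
      have part2 : ∫ u in S..x, flock W (nu (j+1+1)) G u
          = - flock (2*W) (nu j) (fun y => ∫ u in (0:ℝ)..y, flock W (nu 1) G u) (x - S) := by
        have e2 : ∫ u in S..x, flock W (nu (j+1+1)) G u
            = ∫ u in S..x, (fun u => - flock W (nu (j+1)) G (u - S)) u := by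
          refine intervalIntegral.integral_congr fun u hu => ?_
          rw [Set.uIcc_of_le hxS.le] at hu
          rw [flock_succ,
            flock_of_ge W hW _ _ (x := u) (by rw [nu_length]; push_cast; linarith [hu.1]),
            ← hSe]
          ring
        rw [e2, intervalIntegral.integral_neg,
          intervalIntegral.integral_comp_sub_right (fun u => flock W (nu (j+1)) G u) S,
          sub_self, ih (x - S) ⟨by linarith, by linarith⟩]
      rw [split, part1, part2, zero_add, flock_succ, h2jS,
        flock_of_ge (2*W) (by linarith) _ _ (x := x)
          (by rw [nu_length]; push_cast; rw [h2jS]; linarith)]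
      ring

lemma antideriv_intervalIntegrable (w : ℝ) (hw : 0 < w) (h : ℝ → ℝ)
    (hint : IntegrableOn h (Set.Icc 0 w)) (v : List ℝ) :
    ∀ (ℓ : ℕ) (a b : ℝ), IntervalIntegrable (antideriv ℓ (flock w v h)) volume a b := by
  intro ℓ
  induction ℓ with
  | zero => exact fun a b => (flock_integrable w hw v h hint).intervalIntegrable
  | succ ℓ ih =>
    intro a b
    apply Continuous.intervalIntegrable
    exact intervalIntegral.continuous_primitive (fun a b => ih a b) 0

/-- **Anti-derivatives preserve neutrality (Proposition 2 of the appendix).**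
For an integrable base function `h : [0, w] → ℝ` and integers `ℓ, j ≥ 0`, the level-`ℓ`
anti-derivative of the `ν^{ℓ+j}`-flock of `h` is a `ν^j`-flock on `[0, 2^{ℓ+j} w]`, with
base function `h_ℓ = Φ^ℓ[F_{ν^ℓ}[h]] : [0, 2^ℓ w] → ℝ`. -/
theorem antideriv_flock_neutrality
    (w : ℝ) (hw : 0 < w) (h : ℝ → ℝ)
    (hint : IntegrableOn h (Set.Icc 0 w)) (ℓ j : ℕ) :
    ∀ x ∈ Set.Icc (0:ℝ) (2 ^ (ℓ + j) * w),
      antideriv ℓ (flock w (nu (ℓ + j)) h) x =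
        flock (2 ^ ℓ * w) (nu j) (antideriv ℓ (flock w (nu ℓ) h)) x := by
  induction ℓ generalizing j with
  | zero =>
    intro x _
    simp only [antideriv, Nat.zero_add, pow_zero, one_mul]
    rw [show nu 0 = [(1:ℝ)] from rfl]
    exact (flock_flock_one w (nu j) h x).symm
  | succ ℓ ih =>
    rw [show ℓ + 1 + j = ℓ + (j + 1) from by omega]
    rintro x ⟨hx0, hxt⟩
    have hW : (0:ℝ) < 2 ^ ℓ * w := by positivity
    have hGint : IntegrableOn (antideriv ℓ (flock w (nu ℓ) h)) (Set.Icc 0 (2 ^ ℓ * w)) :=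
      (intervalIntegrable_iff_integrableOn_Icc_of_le hW.le).mp
        (antideriv_intervalIntegrable w hw h hint (nu ℓ) ℓ 0 (2 ^ ℓ * w))
    have hL : antideriv (ℓ+1) (flock w (nu (ℓ + (j+1))) h) x
        = ∫ u in (0:ℝ)..x, flock (2 ^ ℓ * w) (nu (j+1)) (antideriv ℓ (flock w (nu ℓ) h)) u := by
      show (∫ u in (0:ℝ)..x, antideriv ℓ (flock w (nu (ℓ + (j+1))) h) u) = _
      refine intervalIntegral.integral_congr fun u hu => ?_
      rw [Set.uIcc_of_le hx0] at hu
      exact ih (j+1) u ⟨hu.1, le_trans hu.2 hxt⟩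
    rw [hL, lemB (2 ^ ℓ * w) hW _ hGint j x
      ⟨hx0, by rw [show (2:ℝ)^(j+1) * (2^ℓ*w) = 2^(ℓ+(j+1))*w from by ring]; exact hxt⟩,
      show (2:ℝ)^(ℓ+1)*w = 2*(2^ℓ*w) from by ring]
    refine flock_congr (2*(2^ℓ*w)) (nu j) (fun y hy => ?_) x
    show (∫ u in (0:ℝ)..y, flock (2^ℓ*w) (nu 1) (antideriv ℓ (flock w (nu ℓ) h)) u)
        = ∫ u in (0:ℝ)..y, antideriv ℓ (flock w (nu (ℓ+1)) h) u
    refine (intervalIntegral.integral_congr fun u hu => ?_).symm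
    rw [Set.uIcc_of_le hy.1] at hu
    have h2 : u ≤ 2^(ℓ+1)*w := by
      have e : (2:ℝ)^(ℓ+1)*w = 2*(2^ℓ*w) := by ring
      linarith [hu.2, hy.2]
    exact ih 1 u ⟨hu.1, h2⟩
end

section
/- Let Z_1 and Z_2 be {−1, +1}-valued random variables with means r_1, r_2 ∈ (−1, 1). If |r_2| ≤ 1/2, then KL(Z_1, Z_2) ≤ (4/3)·(r_1 − r_2)². Equivalently, in terms of the means: ((r_1+1)/2)·ln((r_1+1)/(r_2+1)) + ((1−r_1)/2)·ln((1−r_1)/(1−r_2)) ≤ (4/3)·(r_1 − r_2)². -/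
/-- **Bounding the KL-divergence (Lemma 11).**
Let `Z₁, Z₂` be `{−1,+1}`-valued random variables with means `r₁, r₂ ∈ (−1, 1)`, i.e.
`Zᵢ` takes the value `+1` with probability `(1 + rᵢ)/2` and `−1` with probability
`(1 − rᵢ)/2`.  If `|r₂| ≤ 1/2` then `KL(Z₁, Z₂) ≤ (4/3)·(r₁ − r₂)²`; written out in terms
of the means, the KL-divergence is
`((r₁+1)/2)·ln((r₁+1)/(r₂+1)) + ((1−r₁)/2)·ln((1−r₁)/(1−r₂))`. -/
theorem kl_divergence_bound (r₁ r₂ : ℝ)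
    (h₁ : r₁ ∈ Set.Ioo (-1 : ℝ) 1) (h₂ : r₂ ∈ Set.Ioo (-1 : ℝ) 1)
    (hr₂ : |r₂| ≤ 1 / 2) :
    (r₁ + 1) / 2 * Real.log ((r₁ + 1) / (r₂ + 1)) +
      (1 - r₁) / 2 * Real.log ((1 - r₁) / (1 - r₂)) ≤ 4 / 3 * (r₁ - r₂) ^ 2 := by
  obtain ⟨ha1, ha2⟩ := h₁
  obtain ⟨hb1, hb2⟩ := h₂
  have hp1 : (0:ℝ) < r₁ + 1 := by linarith
  have hp2 : (0:ℝ) < 1 - r₁ := by linarith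
  have hq1 : (0:ℝ) < r₂ + 1 := by linarith
  have hq2 : (0:ℝ) < 1 - r₂ := by linarith
  have hsq : r₂ ^ 2 ≤ 1 / 4 := by
    have := abs_le.mp hr₂
    nlinarith [this.1, this.2]
  have hl1 : Real.log ((r₁ + 1) / (r₂ + 1)) ≤ (r₁ + 1) / (r₂ + 1) - 1 :=
    Real.log_le_sub_one_of_pos (div_pos hp1 hq1)
  have hl2 : Real.log ((1 - r₁) / (1 - r₂)) ≤ (1 - r₁) / (1 - r₂) - 1 :=
    Real.log_le_sub_one_of_pos (div_pos hp2 hq2)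
  have key : (r₁ + 1) / 2 * ((r₁ + 1) / (r₂ + 1) - 1) +
      (1 - r₁) / 2 * ((1 - r₁) / (1 - r₂) - 1) ≤ 4 / 3 * (r₁ - r₂) ^ 2 := by
    have heq : (r₁ + 1) / 2 * ((r₁ + 1) / (r₂ + 1) - 1) +
        (1 - r₁) / 2 * ((1 - r₁) / (1 - r₂) - 1)
        = (r₁ - r₂) ^ 2 / ((r₂ + 1) * (1 - r₂)) := by
      field_simp
      ring
    rw [heq, div_le_iff₀ (by positivity)]
    nlinarith [sq_nonneg (r₁ - r₂)]
  have m1 := mul_le_mul_of_nonneg_left hl1 (by linarith : (0:ℝ) ≤ (r₁+1)/2)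
  have m2 := mul_le_mul_of_nonneg_left hl2 (by linarith : (0:ℝ) ≤ (1-r₁)/2)
  linarith
end
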